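/- arXiv:1502.00052 — 12 statements merged into one kernel-verified Lean document; each statement's English description precedes it below -/
import Mathlib

section
/- Let α and β be nonempty sets, f : α → ℝ and g : β → ℝ with f(x) ≥ 0 and g(y) ≥ 0 for all x, y, and P : α → ℝ, Q : β → ℝ with P(x) > 0 and Q(y) > 0 for all x, y. Suppose x* maximizes x ↦ f(x)/P(x) over α with value M₁, y* maximizes y ↦ g(y)/Q(y) over β with value M₂, and (x̂, ŷ) maximizes (x,y) ↦ (f(x)+g(y))/(P(x)+Q(y)) over α × β with value M. If M₁ ≠ M₂, then min(M₁, M₂) < M < max(M₁, M₂). -/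
lemma mediant_left_strict {a b c d : ℝ} (hb : 0 < b) (hd : 0 < d)
    (h : a / b < c / d) : a / b < (a + c) / (b + d) := by
  rw [div_lt_div_iff₀ hb hd] at h
  rw [div_lt_div_iff₀ hb (by linarith)]
  nlinarith

/-- Strict supremum form of the mediant inequality: if the two individual optimal
energy efficiencies differ, then the combined optimal value lies strictly between
them. -/
theorem mediant_sup_strict_between {α β : Type*} [Nonempty α] [Nonempty β]
    (f : α → ℝ) (g : β → ℝ) (P : α → ℝ) (Q : β → ℝ)
    (hf : ∀ x, 0 ≤ f x) (hg : ∀ y, 0 ≤ g y)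
    (hP : ∀ x, 0 < P x) (hQ : ∀ y, 0 < Q y)
    (xs : α) (ys : β) (xh : α) (yh : β)
    (hxs : ∀ x, f x / P x ≤ f xs / P xs)
    (hys : ∀ y, g y / Q y ≤ g ys / Q ys)
    (hxy : ∀ x y, (f x + g y) / (P x + Q y) ≤ (f xh + g yh) / (P xh + Q yh))
    (hne : f xs / P xs ≠ g ys / Q ys) :
    min (f xs / P xs) (g ys / Q ys) < (f xh + g yh) / (P xh + Q yh) ∧
      (f xh + g yh) / (P xh + Q yh) < max (f xs / P xs) (g ys / Q ys) := by
  have hPxs := hP xs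
  have hQys := hQ ys
  have hPxh := hP xh
  have hQyh := hQ yh
  have hsum : 0 < P xh + Q yh := by linarith
  have hfxh : f xh ≤ f xs / P xs * P xh := (div_le_iff₀ hPxh).mp (hxs xh)
  have hgyh : g yh ≤ g ys / Q ys * Q yh := (div_le_iff₀ hQyh).mp (hys yh)
  rcases hne.lt_or_gt with h | h
  · constructor
    · rw [min_eq_left h.le]
      calc f xs / P xs < (f xs + g ys) / (P xs + Q ys) :=
            mediant_left_strict hPxs hQys h
        _ ≤ _ := hxy xs ys
    · rw [max_eq_right h.le, div_lt_iff₀ hsum]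
      nlinarith
  · constructor
    · rw [min_eq_right h.le]
      have := mediant_left_strict hQys hPxs h
      calc g ys / Q ys < (g ys + f xs) / (Q ys + P xs) := this
        _ = (f xs + g ys) / (P xs + Q ys) := by ring_nf
        _ ≤ _ := hxy xs ys
    · rw [max_eq_left h.le, div_lt_iff₀ hsum]
      nlinarith
end

section
/- Let Φ be a finite nonempty set of links with gains g_ℓ > 0 and peak powers P_max,ℓ > 0, with optimal user EE EE*_Φ, and let i ∉ Φ be a further link with gain g_i > 0 and peak power P_max,i > 0, with optimal link EE ee*_i. Then: (a) if EE*_Φ ≤ ee*_i, then EE*_Φ ≤ EE*_{Φ∪{i}} ≤ ee*_i; and (b) if EE*_Φ > ee*_i, then EE*_Φ > EE*_{Φ∪{i}} > ee*_i. (Theorem 1 of the paper.) -/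
/-- The (weighted) link energy efficiency of a link with gain `g` at transmit power `p`:
`ee(p) = ω·B·log₂(1 + p·g/(Γσ²)) / (p/ξ + P_d)`. -/
noncomputable def linkEE (ω B Γ σ2 ξ Pd g p : ℝ) : ℝ :=
  ω * B * Real.logb 2 (1 + p * g / (Γ * σ2)) / (p / ξ + Pd)

/-- `e` is the optimal link EE over the power interval `[0, Pmax]` (attained). -/
def IsOptLinkEE (ω B Γ σ2 ξ Pd g Pmax e : ℝ) : Prop :=
  (∃ p ∈ Set.Icc (0 : ℝ) Pmax, linkEE ω B Γ σ2 ξ Pd g p = e) ∧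
    ∀ p ∈ Set.Icc (0 : ℝ) Pmax, linkEE ω B Γ σ2 ξ Pd g p ≤ e

/-- The user energy efficiency of a user with active link set `S`, gains `g` and
power allocation `p`:
`EE_S(p) = (Σ_{i∈S} ω·B·log₂(1 + p_i g_i/(Γσ²))) / ((Σ_{i∈S} p_i)/ξ + |S|·P_d + P_s)`. -/
noncomputable def userEE {ι : Type*} (ω B Γ σ2 ξ Pd Ps : ℝ) (S : Finset ι)
    (g : ι → ℝ) (p : ι → ℝ) : ℝ :=
  (∑ i ∈ S, ω * B * Real.logb 2 (1 + p i * g i / (Γ * σ2))) /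
    ((∑ i ∈ S, p i) / ξ + S.card * Pd + Ps)

/-- `E` is the optimal user EE over the power box `∏_{i∈S} [0, Pmax_i]` (attained). -/
def IsOptUserEE {ι : Type*} (ω B Γ σ2 ξ Pd Ps : ℝ) (S : Finset ι)
    (g Pmax : ι → ℝ) (E : ℝ) : Prop :=
  (∃ p : ι → ℝ, (∀ i ∈ S, p i ∈ Set.Icc 0 (Pmax i)) ∧
      userEE ω B Γ σ2 ξ Pd Ps S g p = E) ∧
    ∀ p : ι → ℝ, (∀ i ∈ S, p i ∈ Set.Icc 0 (Pmax i)) →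
      userEE ω B Γ σ2 ξ Pd Ps S g p ≤ E

/-- Theorem 1 of the paper: for a link `i ∉ Φ`, if `EE*_Φ ≤ ee*_i` then
`EE*_Φ ≤ EE*_{Φ∪{i}} ≤ ee*_i`, and if `EE*_Φ > ee*_i` then
`EE*_Φ > EE*_{Φ∪{i}} > ee*_i`. -/
theorem userEE_insert_between {ι : Type*} [DecidableEq ι]
    (ω B Γ σ2 ξ Pd Ps : ℝ)
    (hω : 0 < ω) (hB : 0 < B) (hΓ : 0 < Γ) (hσ2 : 0 < σ2)
    (hξ0 : 0 < ξ) (hξ1 : ξ ≤ 1) (hPd : 0 < Pd) (hPs : 0 < Ps)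
    (Φ : Finset ι) (hΦ : Φ.Nonempty) (i : ι) (hi : i ∉ Φ)
    (g Pmax : ι → ℝ)
    (hg : ∀ j ∈ insert i Φ, 0 < g j) (hPm : ∀ j ∈ insert i Φ, 0 < Pmax j)
    (EΦ E' e : ℝ)
    (hEΦ : IsOptUserEE ω B Γ σ2 ξ Pd Ps Φ g Pmax EΦ)
    (hE' : IsOptUserEE ω B Γ σ2 ξ Pd Ps (insert i Φ) g Pmax E')
    (he : IsOptLinkEE ω B Γ σ2 ξ Pd (g i) (Pmax i) e) :
    (EΦ ≤ e → EΦ ≤ E' ∧ E' ≤ e) ∧ (e < EΦ → e < E' ∧ E' < EΦ) := by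
  obtain ⟨⟨pΦ, hpΦmem, hpΦval⟩, hpΦmax⟩ := hEΦ
  obtain ⟨⟨p', hp'mem, hp'val⟩, hp'max⟩ := hE'
  obtain ⟨⟨pe, hpemem, hpeval⟩, hpemax⟩ := he
  -- abbreviations
  set NΦ : ℝ := ∑ j ∈ Φ, ω * B * Real.logb 2 (1 + pΦ j * g j / (Γ * σ2)) with hNΦ
  set DΦ : ℝ := (∑ j ∈ Φ, pΦ j) / ξ + Φ.card * Pd + Ps with hDΦ
  set NΦ' : ℝ := ∑ j ∈ Φ, ω * B * Real.logb 2 (1 + p' j * g j / (Γ * σ2)) with hNΦ'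
  set DΦ' : ℝ := (∑ j ∈ Φ, p' j) / ξ + Φ.card * Pd + Ps with hDΦ'
  set Ne : ℝ := ω * B * Real.logb 2 (1 + pe * g i / (Γ * σ2)) with hNe
  set De : ℝ := pe / ξ + Pd with hDe
  set Ni' : ℝ := ω * B * Real.logb 2 (1 + p' i * g i / (Γ * σ2)) with hNi'
  set Di' : ℝ := p' i / ξ + Pd with hDi'
  -- positivity of denominators
  have hDΦpos : 0 < DΦ := by
    have h1 : (0:ℝ) ≤ ∑ j ∈ Φ, pΦ j := Finset.sum_nonneg fun j hj => (hpΦmem j hj).1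
    have h2 : (0:ℝ) ≤ (Φ.card : ℝ) * Pd := by positivity
    have := div_nonneg h1 hξ0.le
    simp only [hDΦ]; linarith
  have hDΦ'pos : 0 < DΦ' := by
    have h1 : (0:ℝ) ≤ ∑ j ∈ Φ, p' j :=
      Finset.sum_nonneg fun j hj => (hp'mem j (Finset.mem_insert_of_mem hj)).1
    have h2 : (0:ℝ) ≤ (Φ.card : ℝ) * Pd := by positivity
    have := div_nonneg h1 hξ0.le
    simp only [hDΦ']; linarith
  have hDepos : 0 < De := by
    have := div_nonneg hpemem.1 hξ0.le
    simp only [hDe]; linarith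
  have hDi'pos : 0 < Di' := by
    have := div_nonneg (hp'mem i (Finset.mem_insert_self i Φ)).1 hξ0.le
    simp only [hDi']; linarith
  -- exact values
  have hNΦeq : NΦ = EΦ * DΦ := by
    rw [userEE] at hpΦval
    exact (div_eq_iff hDΦpos.ne').mp hpΦval
  have hNeeq : Ne = e * De := by
    rw [linkEE] at hpeval
    exact (div_eq_iff hDepos.ne').mp hpeval
  -- bounds for the optimal allocation on `insert i Φ`
  have hNΦ'le : NΦ' ≤ EΦ * DΦ' := by
    have h := hpΦmax p' fun j hj => hp'mem j (Finset.mem_insert_of_mem hj)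
    rw [userEE, div_le_iff₀ hDΦ'pos] at h
    exact h
  have hNi'le : Ni' ≤ e * Di' := by
    have h := hpemax (p' i) (hp'mem i (Finset.mem_insert_self i Φ))
    rw [linkEE, div_le_iff₀ hDi'pos] at h
    exact h
  -- the value of E' as a mediant
  have hden' : ∀ x S : ℝ, (x + S) / ξ + ((Φ.card : ℝ) + 1) * Pd + Ps =
      (x / ξ + Pd) + (S / ξ + Φ.card * Pd + Ps) := by
    intro x S; rw [add_div]; ring
  have hE'eq : E' = (Ni' + NΦ') / (Di' + DΦ') := by
    rw [← hp'val, userEE, Finset.sum_insert hi, Finset.sum_insert hi,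
      Finset.card_insert_of_notMem hi]
    push_cast
    rw [hden']
  -- candidate allocation: pΦ extended with pe at i
  set q : ι → ℝ := Function.update pΦ i pe with hq
  have hqmem : ∀ j ∈ insert i Φ, q j ∈ Set.Icc 0 (Pmax j) := by
    intro j hj
    rcases Finset.mem_insert.mp hj with rfl | hjΦ
    · simpa [hq] using hpemem
    · have hne : j ≠ i := fun h => hi (h ▸ hjΦ)
      simpa [hq, Function.update_of_ne hne] using hpΦmem j hjΦ
  have hVle : (Ne + NΦ) / (De + DΦ) ≤ E' := by
    have h := hp'max q hqmem
    rw [userEE, Finset.sum_insert hi, Finset.sum_insert hi,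
      Finset.card_insert_of_notMem hi] at h
    have hqi : q i = pe := Function.update_self i pe pΦ
    have hsum1 : ∑ j ∈ Φ, ω * B * Real.logb 2 (1 + q j * g j / (Γ * σ2)) = NΦ := by
      refine Finset.sum_congr rfl fun j hj => ?_
      have hne : j ≠ i := fun h => hi (h ▸ hj)
      rw [hq, Function.update_of_ne hne]
    have hsum2 : ∑ j ∈ Φ, q j = ∑ j ∈ Φ, pΦ j := by
      refine Finset.sum_congr rfl fun j hj => ?_
      have hne : j ≠ i := fun h => hi (h ▸ hj)
      rw [hq, Function.update_of_ne hne]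
    rw [hqi, hsum1, hsum2] at h
    push_cast at h
    rw [hden'] at h
    exact h
  constructor
  · intro hle
    have h1 : EΦ ≤ (Ne + NΦ) / (De + DΦ) := by
      rw [le_div_iff₀ (by linarith)]
      have := mul_le_mul_of_nonneg_right hle hDepos.le
      linarith
    have h2 : E' ≤ e := by
      rw [hE'eq, div_le_iff₀ (by linarith)]
      have := mul_le_mul_of_nonneg_right hle hDΦ'pos.le
      linarith
    exact ⟨h1.trans hVle, h2⟩
  · intro hlt
    have h1 : e < (Ne + NΦ) / (De + DΦ) := by
      rw [lt_div_iff₀ (by linarith)]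
      have := mul_lt_mul_of_pos_right hlt hDΦpos
      linarith
    have h2 : E' < EΦ := by
      rw [hE'eq, div_lt_iff₀ (by linarith)]
      have := mul_lt_mul_of_pos_right hlt hDi'pos
      linarith
    exact ⟨h1.trans_le hVle, h2⟩
end

section
/- Let Φ be a finite nonempty set of links with gains g_ℓ > 0 and peak powers P_max,ℓ > 0, with optimal user EE EE*_Φ, and let i ∉ Φ be a further link with optimal link EE ee*_i. Then EE*_{Φ∪{i}} ≥ EE*_Φ if and only if ee*_i ≥ EE*_Φ, and EE*_{Φ∪{i}} > EE*_Φ if and only if ee*_i > EE*_Φ. That is, activating link i does not decrease (respectively, strictly increases) the user EE exactly when the optimal link EE of i is at least (respectively, strictly exceeds) the current optimal user EE. -/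
private lemma med_le {a b c d M : ℝ} (hc : 0 < c) (hd : 0 < d)
    (ha : a ≤ M * c) (hb : b ≤ M * d) : (a + b) / (c + d) ≤ M := by
  rw [div_le_iff₀ (by linarith)]; nlinarith

private lemma med_lt {a b c d M : ℝ} (hc : 0 < c) (hd : 0 < d)
    (ha : a < M * c) (hb : b ≤ M * d) : (a + b) / (c + d) < M := by
  rw [div_lt_iff₀ (by linarith)]; nlinarith

private lemma med_ge {a b c d M : ℝ} (hc : 0 < c) (hd : 0 < d)
    (ha : M * c ≤ a) (hb : M * d ≤ b) : M ≤ (a + b) / (c + d) := by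
  rw [le_div_iff₀ (by linarith)]; nlinarith

private lemma med_gt {a b c d M : ℝ} (hc : 0 < c) (hd : 0 < d)
    (ha : M * c < a) (hb : M * d ≤ b) : M < (a + b) / (c + d) := by
  rw [lt_div_iff₀ (by linarith)]; nlinarith

/-- Activating link `i ∉ Φ` does not decrease (resp. strictly increases) the optimal
user EE exactly when the optimal link EE of `i` is at least (resp. strictly exceeds)
the current optimal user EE. -/
theorem userEE_insert_iff {ι : Type*} [DecidableEq ι]
    (ω B Γ σ2 ξ Pd Ps : ℝ)
    (hω : 0 < ω) (hB : 0 < B) (hΓ : 0 < Γ) (hσ2 : 0 < σ2)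
    (hξ0 : 0 < ξ) (hξ1 : ξ ≤ 1) (hPd : 0 < Pd) (hPs : 0 < Ps)
    (Φ : Finset ι) (hΦ : Φ.Nonempty) (i : ι) (hi : i ∉ Φ)
    (g Pmax : ι → ℝ)
    (hg : ∀ j ∈ insert i Φ, 0 < g j) (hPm : ∀ j ∈ insert i Φ, 0 < Pmax j)
    (EΦ E' e : ℝ)
    (hEΦ : IsOptUserEE ω B Γ σ2 ξ Pd Ps Φ g Pmax EΦ)
    (hE' : IsOptUserEE ω B Γ σ2 ξ Pd Ps (insert i Φ) g Pmax E')
    (he : IsOptLinkEE ω B Γ σ2 ξ Pd (g i) (Pmax i) e) :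
    (EΦ ≤ E' ↔ EΦ ≤ e) ∧ (EΦ < E' ↔ EΦ < e) := by
  obtain ⟨⟨p₀, hp₀f, hp₀v⟩, hΦmax⟩ := hEΦ
  obtain ⟨⟨p₁, hp₁f, hp₁v⟩, hImax⟩ := hE'
  obtain ⟨⟨q, ⟨hq0, hqP⟩, hqv⟩, hemax⟩ := he
  have hins : ∀ p : ι → ℝ, userEE ω B Γ σ2 ξ Pd Ps (insert i Φ) g p =
      (ω * B * Real.logb 2 (1 + p i * g i / (Γ * σ2)) +
        ∑ j ∈ Φ, ω * B * Real.logb 2 (1 + p j * g j / (Γ * σ2))) /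
      ((p i / ξ + Pd) + ((∑ j ∈ Φ, p j) / ξ + (Φ.card : ℝ) * Pd + Ps)) := by
    intro p
    simp only [userEE, Finset.sum_insert hi, Finset.card_insert_of_notMem hi,
      Nat.cast_add, Nat.cast_one]
    have hden : ((p i + ∑ j ∈ Φ, p j) / ξ + ((Φ.card : ℝ) + 1) * Pd + Ps)
        = ((p i / ξ + Pd) + ((∑ j ∈ Φ, p j) / ξ + (Φ.card : ℝ) * Pd + Ps)) := by
      field_simp; ring
    rw [hden]
  -- denominators
  have hd : (0:ℝ) < q / ξ + Pd := add_pos_of_nonneg_of_pos (div_nonneg hq0 hξ0.le) hPd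
  have hD₀ : (0:ℝ) < (∑ j ∈ Φ, p₀ j) / ξ + (Φ.card : ℝ) * Pd + Ps := by
    have h1 : (0:ℝ) ≤ (∑ j ∈ Φ, p₀ j) / ξ :=
      div_nonneg (Finset.sum_nonneg fun j hj => (hp₀f j hj).1) hξ0.le
    have h2 : (0:ℝ) ≤ (Φ.card : ℝ) * Pd := by positivity
    linarith
  have hrq : ω * B * Real.logb 2 (1 + q * g i / (Γ * σ2)) = e * (q / ξ + Pd) := by
    rw [linkEE, div_eq_iff hd.ne'] at hqv; exact hqv
  have hN₀ : (∑ j ∈ Φ, ω * B * Real.logb 2 (1 + p₀ j * g j / (Γ * σ2)))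
      = EΦ * ((∑ j ∈ Φ, p₀ j) / ξ + (Φ.card : ℝ) * Pd + Ps) := by
    rw [userEE, div_eq_iff hD₀.ne'] at hp₀v; exact hp₀v
  -- the combined allocation for the forward direction
  set p₂ : ι → ℝ := Function.update p₀ i q with hp₂
  have hp₂i : p₂ i = q := Function.update_self i q p₀
  have hp₂Φ : ∀ j ∈ Φ, p₂ j = p₀ j := by
    intro j hj
    have hne : j ≠ i := by rintro rfl; exact hi hj
    exact Function.update_of_ne hne q p₀
  have hp₂f : ∀ j ∈ insert i Φ, p₂ j ∈ Set.Icc 0 (Pmax j) := by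
    intro j hj
    rcases Finset.mem_insert.mp hj with rfl | hjΦ
    · rw [hp₂i]; exact ⟨hq0, hqP⟩
    · rw [hp₂Φ j hjΦ]; exact hp₀f j hjΦ
  have h2val : userEE ω B Γ σ2 ξ Pd Ps (insert i Φ) g p₂ =
      (e * (q / ξ + Pd) + EΦ * ((∑ j ∈ Φ, p₀ j) / ξ + (Φ.card : ℝ) * Pd + Ps)) /
      ((q / ξ + Pd) + ((∑ j ∈ Φ, p₀ j) / ξ + (Φ.card : ℝ) * Pd + Ps)) := by
    rw [hins p₂, hp₂i, Finset.sum_congr rfl (fun j hj => by rw [hp₂Φ j hj]),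
      Finset.sum_congr rfl hp₂Φ, hrq, hN₀]
  -- facts about the optimal allocation p₁ on the inserted set
  have hp₁i := hp₁f i (Finset.mem_insert_self i Φ)
  have hd₁ : (0:ℝ) < p₁ i / ξ + Pd :=
    add_pos_of_nonneg_of_pos (div_nonneg hp₁i.1 hξ0.le) hPd
  have hc₁ : (0:ℝ) < (∑ j ∈ Φ, p₁ j) / ξ + (Φ.card : ℝ) * Pd + Ps := by
    have h1 : (0:ℝ) ≤ (∑ j ∈ Φ, p₁ j) / ξ :=
      div_nonneg (Finset.sum_nonneg fun j hj =>
        (hp₁f j (Finset.mem_insert_of_mem hj)).1) hξ0.le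
    have h2 : (0:ℝ) ≤ (Φ.card : ℝ) * Pd := by positivity
    linarith
  have ha : (∑ j ∈ Φ, ω * B * Real.logb 2 (1 + p₁ j * g j / (Γ * σ2)))
      ≤ EΦ * ((∑ j ∈ Φ, p₁ j) / ξ + (Φ.card : ℝ) * Pd + Ps) := by
    have := hΦmax p₁ (fun j hj => hp₁f j (Finset.mem_insert_of_mem hj))
    rw [userEE, div_le_iff₀ hc₁] at this; exact this
  have hb : ω * B * Real.logb 2 (1 + p₁ i * g i / (Γ * σ2)) ≤ e * (p₁ i / ξ + Pd) := by
    have := hemax (p₁ i) hp₁i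
    rw [linkEE, div_le_iff₀ hd₁] at this; exact this
  have hE'eq : E' =
      (ω * B * Real.logb 2 (1 + p₁ i * g i / (Γ * σ2)) +
        ∑ j ∈ Φ, ω * B * Real.logb 2 (1 + p₁ j * g j / (Γ * σ2))) /
      ((p₁ i / ξ + Pd) + ((∑ j ∈ Φ, p₁ j) / ξ + (Φ.card : ℝ) * Pd + Ps)) := by
    rw [← hp₁v, hins p₁]
  -- the four implications
  have h1 : EΦ ≤ e → EΦ ≤ E' := by
    intro h
    have h2 : EΦ ≤ userEE ω B Γ σ2 ξ Pd Ps (insert i Φ) g p₂ := by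
      rw [h2val]
      exact med_ge hd hD₀ (mul_le_mul_of_nonneg_right h hd.le) le_rfl
    exact h2.trans (hImax p₂ hp₂f)
  have h2 : EΦ < e → EΦ < E' := by
    intro h
    have h2 : EΦ < userEE ω B Γ σ2 ξ Pd Ps (insert i Φ) g p₂ := by
      rw [h2val]
      exact med_gt hd hD₀ (mul_lt_mul_of_pos_right h hd) le_rfl
    exact h2.trans_le (hImax p₂ hp₂f)
  have h3 : e ≤ EΦ → E' ≤ EΦ := by
    intro h
    rw [hE'eq]
    exact med_le hd₁ hc₁ (hb.trans (mul_le_mul_of_nonneg_right h hd₁.le)) ha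
  have h4 : e < EΦ → E' < EΦ := by
    intro h
    rw [hE'eq]
    exact med_lt hd₁ hc₁ (hb.trans_lt (mul_lt_mul_of_pos_right h hd₁)) ha
  constructor
  · exact ⟨fun h => le_of_not_gt fun hc => absurd h (not_le.mpr (h4 hc)),
      fun h => h1 h⟩
  · exact ⟨fun h => lt_of_not_ge fun hc => absurd h (not_lt.mpr (h3 hc)),
      fun h => h2 h⟩
end

section
/- Let L be a finite set of links with gains g_i > 0 and peak powers P_max,i > 0, and suppose the nonempty subset S* ⊆ L maximizes the optimal user EE EE*_S over all nonempty subsets S ⊆ L. Then every link i ∈ S* satisfies ee*_i ≥ EE*_{S*}, and every link i ∈ L \ S* satisfies ee*_i ≤ EE*_{S*}. In other words, an optimal active link set contains every link whose optimal link EE strictly exceeds the achieved optimal user EE and contains no link whose optimal link EE is strictly below it. -/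
/-- Mediant-type inequality: if `(a+c)/(b+d) ≤ a/b` then `c/d ≤ a/b`. -/
lemma mediant_right_aux {a b c d : ℝ} (hb : 0 < b) (hd : 0 < d)
    (h : (a + c) / (b + d) ≤ a / b) : c / d ≤ a / b := by
  rw [div_le_div_iff₀ (by linarith) hb] at h
  rw [div_le_div_iff₀ hd hb]
  nlinarith

/-- Mediant-type inequality: if `a/b ≤ (a+c)/(b+d)` then `(a+c)/(b+d) ≤ c/d`. -/
lemma mediant_left_aux {a b c d : ℝ} (hb : 0 < b) (hd : 0 < d)
    (h : a / b ≤ (a + c) / (b + d)) : (a + c) / (b + d) ≤ c / d := by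
  rw [div_le_div_iff₀ hb (by linarith)] at h
  rw [div_le_div_iff₀ (by linarith) hd]
  nlinarith

/-- If a nonempty subset `S*` of the available links `L` maximizes the optimal user
EE over all nonempty subsets of `L`, then every link in `S*` has optimal link EE at
least `EE*_{S*}`, and every link outside `S*` has optimal link EE at most `EE*_{S*}`
(Remark 1 of the paper: optimality of the greedy link-activation procedure). -/
theorem optimal_linkset_linkEE_bounds {ι : Type*} [DecidableEq ι]
    (ω B Γ σ2 ξ Pd Ps : ℝ)
    (hω : 0 < ω) (hB : 0 < B) (hΓ : 0 < Γ) (hσ2 : 0 < σ2)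
    (hξ0 : 0 < ξ) (hξ1 : ξ ≤ 1) (hPd : 0 < Pd) (hPs : 0 < Ps)
    (L : Finset ι) (g Pmax : ι → ℝ)
    (hg : ∀ j ∈ L, 0 < g j) (hPm : ∀ j ∈ L, 0 < Pmax j)
    (Sstar : Finset ι) (hsub : Sstar ⊆ L) (hSne : Sstar.Nonempty)
    (E : Finset ι → ℝ) (e : ι → ℝ)
    (hE : ∀ S : Finset ι, S ⊆ L → S.Nonempty →
      IsOptUserEE ω B Γ σ2 ξ Pd Ps S g Pmax (E S))
    (he : ∀ j ∈ L, IsOptLinkEE ω B Γ σ2 ξ Pd (g j) (Pmax j) (e j))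
    (hopt : ∀ S : Finset ι, S ⊆ L → S.Nonempty → E S ≤ E Sstar) :
    (∀ j ∈ Sstar, E Sstar ≤ e j) ∧ (∀ j ∈ L \ Sstar, e j ≤ E Sstar) := by
  -- notation for rate terms
  set r : ι → ℝ → ℝ := fun i q => ω * B * Real.logb 2 (1 + q * g i / (Γ * σ2)) with hr_def
  have hΓσ : 0 < Γ * σ2 := mul_pos hΓ hσ2
  have hr_nonneg : ∀ i ∈ L, ∀ q : ℝ, 0 ≤ q → 0 ≤ r i q := by
    intro i hi q hq
    have h1 : (0:ℝ) ≤ q * g i / (Γ * σ2) :=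
      div_nonneg (mul_nonneg hq (hg i hi).le) hΓσ.le
    have : (0:ℝ) ≤ Real.logb 2 (1 + q * g i / (Γ * σ2)) :=
      Real.logb_nonneg one_lt_two (by linarith)
    have hωB : (0:ℝ) ≤ ω * B := (mul_pos hω hB).le
    exact mul_nonneg hωB this
  -- positivity of denominators
  have hden : ∀ (S : Finset ι) (p : ι → ℝ), (∀ i ∈ S, 0 ≤ p i) →
      0 < (∑ i ∈ S, p i) / ξ + S.card * Pd + Ps := by
    intro S p hp
    have h1 : 0 ≤ ∑ i ∈ S, p i := Finset.sum_nonneg hp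
    have h2 : 0 ≤ (∑ i ∈ S, p i) / ξ := div_nonneg h1 hξ0.le
    have h3 : 0 ≤ (S.card : ℝ) * Pd := mul_nonneg (Nat.cast_nonneg _) hPd.le
    linarith
  obtain ⟨⟨pst, hpst, hpstE⟩, _⟩ := hE Sstar hsub hSne
  have hpst0 : ∀ i ∈ Sstar, 0 ≤ pst i := fun i hi => (hpst i hi).1
  constructor
  · -- part 1: links in Sstar have e j ≥ E Sstar
    intro j hjS
    have hjL : j ∈ L := hsub hjS
    obtain ⟨_, hemax⟩ := he j hjL
    have hpj : pst j ∈ Set.Icc (0:ℝ) (Pmax j) := hpst j hjS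
    have hlink : linkEE ω B Γ σ2 ξ Pd (g j) (pst j) ≤ e j := hemax _ hpj
    have hdj : 0 < pst j / ξ + Pd := by
      have := div_nonneg hpj.1 hξ0.le; linarith
    -- split the sums at j
    set S'' := Sstar.erase j with hS''
    have hjS'' : j ∉ S'' := Finset.notMem_erase j Sstar
    have hins : insert j S'' = Sstar := Finset.insert_erase hjS
    have hsumr : ∑ i ∈ Sstar, r i (pst i) = r j (pst j) + ∑ i ∈ S'', r i (pst i) := by
      rw [← hins, Finset.sum_insert hjS'']
    have hsump : ∑ i ∈ Sstar, pst i = pst j + ∑ i ∈ S'', pst i := by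
      rw [← hins, Finset.sum_insert hjS'']
    have hcard : (Sstar.card : ℝ) = S''.card + 1 := by
      rw [← hins, Finset.card_insert_of_notMem hjS'']; push_cast; ring
    have hEeq : E Sstar =
        ((∑ i ∈ S'', r i (pst i)) + r j (pst j)) /
          (((∑ i ∈ S'', pst i) / ξ + S''.card * Pd + Ps) + (pst j / ξ + Pd)) := by
      rw [← hpstE]
      show (∑ i ∈ Sstar, r i (pst i)) /
          ((∑ i ∈ Sstar, pst i) / ξ + Sstar.card * Pd + Ps) = _
      rw [hsumr, hsump, hcard, add_comm (r j (pst j))]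
      congr 1
      ring
    rcases S''.eq_empty_or_nonempty with hS''e | hS''ne
    · -- Sstar = {j}
      have hEval : E Sstar = r j (pst j) / ((pst j / ξ + Pd) + Ps) := by
        rw [hEeq, hS''e]; simp; congr 1; ring
      have hrj : 0 ≤ r j (pst j) := hr_nonneg j hjL _ hpj.1
      have h1 : r j (pst j) / ((pst j / ξ + Pd) + Ps) ≤ r j (pst j) / (pst j / ξ + Pd) := by
        rw [div_le_div_iff₀ (by linarith) hdj]; nlinarith
      calc E Sstar ≤ r j (pst j) / (pst j / ξ + Pd) := by rw [hEval]; exact h1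
        _ ≤ e j := hlink
    · -- S'' is a nonempty feasible subset
      have hS''sub : S'' ⊆ L := (Finset.erase_subset j Sstar).trans hsub
      have hfeas'' : ∀ i ∈ S'', pst i ∈ Set.Icc 0 (Pmax i) := fun i hi =>
        hpst i (Finset.mem_of_mem_erase hi)
      have hle1 : userEE ω B Γ σ2 ξ Pd Ps S'' g pst ≤ E S'' :=
        (hE S'' hS''sub hS''ne).2 pst hfeas''
      have hle2 : E S'' ≤ E Sstar := hopt S'' hS''sub hS''ne
      have hD'' : 0 < (∑ i ∈ S'', pst i) / ξ + S''.card * Pd + Ps :=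
        hden S'' pst (fun i hi => (hfeas'' i hi).1)
      have huser'' : userEE ω B Γ σ2 ξ Pd Ps S'' g pst =
          (∑ i ∈ S'', r i (pst i)) / ((∑ i ∈ S'', pst i) / ξ + S''.card * Pd + Ps) := rfl
      have hmed : (∑ i ∈ S'', r i (pst i)) / ((∑ i ∈ S'', pst i) / ξ + S''.card * Pd + Ps)
          ≤ ((∑ i ∈ S'', r i (pst i)) + r j (pst j)) /
            (((∑ i ∈ S'', pst i) / ξ + S''.card * Pd + Ps) + (pst j / ξ + Pd)) := by
        rw [← hEeq, ← huser'']; exact hle1.trans hle2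
      have := mediant_left_aux hD'' hdj hmed
      calc E Sstar ≤ r j (pst j) / (pst j / ξ + Pd) := by rw [hEeq]; exact this
        _ ≤ e j := hlink
  · -- part 2: links outside Sstar have e j ≤ E Sstar
    intro j hjd
    obtain ⟨hjL, hjS⟩ := Finset.mem_sdiff.mp hjd
    obtain ⟨⟨pj, hpj, hpje⟩, _⟩ := he j hjL
    set S' := insert j Sstar with hS'
    have hS'sub : S' ⊆ L := Finset.insert_subset hjL hsub
    have hS'ne : S'.Nonempty := Finset.insert_nonempty _ _
    set p' : ι → ℝ := fun i => if i = j then pj else pst i with hp'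
    have hp'j : p' j = pj := by simp [hp']
    have hp'S : ∀ i ∈ Sstar, p' i = pst i := by
      intro i hi
      have : i ≠ j := fun h => hjS (h ▸ hi)
      simp [hp', this]
    have hfeas : ∀ i ∈ S', p' i ∈ Set.Icc 0 (Pmax i) := by
      intro i hi
      rcases Finset.mem_insert.mp hi with h | h
      · subst h; rw [hp'j]; exact hpj
      · rw [hp'S i h]; exact hpst i h
    have hle : userEE ω B Γ σ2 ξ Pd Ps S' g p' ≤ E Sstar :=
      ((hE S' hS'sub hS'ne).2 p' hfeas).trans (hopt S' hS'sub hS'ne)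
    have hsumr : ∑ i ∈ S', r i (p' i) = (∑ i ∈ Sstar, r i (pst i)) + r j pj := by
      rw [hS', Finset.sum_insert hjS, hp'j]
      rw [Finset.sum_congr rfl (fun i hi => by rw [hp'S i hi])]
      ring
    have hsump : ∑ i ∈ S', p' i = (∑ i ∈ Sstar, pst i) + pj := by
      rw [hS', Finset.sum_insert hjS, hp'j]
      rw [Finset.sum_congr rfl (fun i hi => by rw [hp'S i hi])]
      ring
    have hcard : (S'.card : ℝ) = Sstar.card + 1 := by
      rw [hS', Finset.card_insert_of_notMem hjS]; push_cast; ring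
    have huser' : userEE ω B Γ σ2 ξ Pd Ps S' g p' =
        ((∑ i ∈ Sstar, r i (pst i)) + r j pj) /
          (((∑ i ∈ Sstar, pst i) / ξ + Sstar.card * Pd + Ps) + (pj / ξ + Pd)) := by
      show (∑ i ∈ S', r i (p' i)) /
          ((∑ i ∈ S', p' i) / ξ + S'.card * Pd + Ps) = _
      rw [hsumr, hsump, hcard]
      congr 1
      ring
    have hD : 0 < (∑ i ∈ Sstar, pst i) / ξ + Sstar.card * Pd + Ps := hden Sstar pst hpst0
    have hdj : 0 < pj / ξ + Pd := by
      have := div_nonneg hpj.1 hξ0.le; linarith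
    have hEeq : E Sstar =
        (∑ i ∈ Sstar, r i (pst i)) / ((∑ i ∈ Sstar, pst i) / ξ + Sstar.card * Pd + Ps) := by
      rw [← hpstE]; rfl
    have hmed : ((∑ i ∈ Sstar, r i (pst i)) + r j pj) /
          (((∑ i ∈ Sstar, pst i) / ξ + Sstar.card * Pd + Ps) + (pj / ξ + Pd))
        ≤ (∑ i ∈ Sstar, r i (pst i)) /
            ((∑ i ∈ Sstar, pst i) / ξ + Sstar.card * Pd + Ps) := by
      rw [← huser', ← hEeq]; exact hle
    have := mediant_right_aux hD hdj hmed
    calc e j = r j pj / (pj / ξ + Pd) := hpje.symm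
      _ ≤ E Sstar := by rw [hEeq]; exact this
end

section
/- Let links 1, …, n (with gains g_i > 0 and peak powers P_max,i > 0) be indexed so that their optimal link EEs are in descending order, ee*_1 ≥ ee*_2 ≥ … ≥ ee*_n. For 0 ≤ m ≤ n write Φ_m = {1, …, m} and E_m = EE*_{Φ_m} (with E_0 = 0), and suppose j is the least index with ee*_j < E_{j−1} (the index at which the greedy procedure stops). Then: (i) E_0 ≤ E_1 ≤ … ≤ E_{j−1}, i.e., the user EE is nondecreasing along the prefixes before the stopping index; (ii) ee*_i < E_{j−1} for every i with j ≤ i ≤ n, i.e., every rejected link (virtual user) has optimal link EE strictly below the optimal user EE of the greedy output (Lemma 1 of the paper); (iii) E_m < E_{j−1} for every m with j ≤ m ≤ n, so the greedy stopping prefix Φ_{j−1} strictly dominates all longer prefixes. -/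
private lemma med_le_s5 (c N D r d : ℝ) (hD : 0 < D) (hd : 0 < d)
    (hN : N = c * D) (hr : c * d ≤ r) : c ≤ (N + r) / (D + d) := by
  rw [le_div_iff₀ (by linarith)]; nlinarith

private lemma med_lt_s5 (c N D r d : ℝ) (hD : 0 < D) (hd : 0 < d)
    (hN : N ≤ c * D) (hr : r < c * d) : (N + r) / (D + d) < c := by
  rw [div_lt_iff₀ (by linarith)]; nlinarith

/-- Properties of the greedy link-activation procedure: links `1, …, n` are sorted in
descending order of optimal link EE, `Φ_m = {1, …, m}`, `E m = EE*_{Φ_m}` (with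
`E 0 = 0`), and `j` is the least index with `ee*_j < E (j-1)` (the greedy stopping
index). Then (i) the user EE is nondecreasing along the prefixes before `j`;
(ii) every rejected link has optimal link EE strictly below `E (j-1)` (Lemma 1);
(iii) every prefix of length `≥ j` has optimal user EE strictly below `E (j-1)`. -/
theorem greedy_linkEE_prefix_properties
    (ω B Γ σ2 ξ Pd Ps : ℝ)
    (hω : 0 < ω) (hB : 0 < B) (hΓ : 0 < Γ) (hσ2 : 0 < σ2)
    (hξ0 : 0 < ξ) (hξ1 : ξ ≤ 1) (hPd : 0 < Pd) (hPs : 0 < Ps)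
    (n : ℕ) (hn : 1 ≤ n) (g Pmax : ℕ → ℝ)
    (hg : ∀ i, 1 ≤ i → i ≤ n → 0 < g i) (hPm : ∀ i, 1 ≤ i → i ≤ n → 0 < Pmax i)
    (e : ℕ → ℝ)
    (he : ∀ i, 1 ≤ i → i ≤ n → IsOptLinkEE ω B Γ σ2 ξ Pd (g i) (Pmax i) (e i))
    (hdesc : ∀ i j, 1 ≤ i → i ≤ j → j ≤ n → e j ≤ e i)
    (E : ℕ → ℝ) (hE0 : E 0 = 0)
    (hE : ∀ m, 1 ≤ m → m ≤ n →
      IsOptUserEE ω B Γ σ2 ξ Pd Ps (Finset.Icc 1 m) g Pmax (E m))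
    (j : ℕ) (hj1 : 1 ≤ j) (hjn : j ≤ n)
    (hstop : e j < E (j - 1))
    (hleast : ∀ m, 1 ≤ m → m < j → E (m - 1) ≤ e m) :
    (∀ m, 1 ≤ m → m ≤ j - 1 → E (m - 1) ≤ E m) ∧
      (∀ i, j ≤ i → i ≤ n → e i < E (j - 1)) ∧
      (∀ m, j ≤ m → m ≤ n → E m < E (j - 1)) := by
  set f : (ℕ → ℝ) → ℕ → ℝ := fun p i => ω * B * Real.logb 2 (1 + p i * g i / (Γ * σ2))
    with hf
  have hcardIcc : ∀ m : ℕ, (Finset.Icc 1 m).card = m := by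
    intro m; rw [Nat.card_Icc]; omega
  have hDpos : ∀ (k : ℕ) (p : ℕ → ℝ), (∀ i ∈ Finset.Icc 1 k, 0 ≤ p i) →
      0 < (∑ i ∈ Finset.Icc 1 k, p i) / ξ + (k : ℝ) * Pd + Ps := by
    intro k p hp
    have hs : 0 ≤ (∑ i ∈ Finset.Icc 1 k, p i) := Finset.sum_nonneg hp
    have h1 : 0 ≤ (∑ i ∈ Finset.Icc 1 k, p i) / ξ := div_nonneg hs hξ0.le
    have h2 : 0 ≤ (k : ℝ) * Pd := by positivity
    linarith
  have huEE : ∀ (m : ℕ) (p : ℕ → ℝ), userEE ω B Γ σ2 ξ Pd Ps (Finset.Icc 1 m) g p =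
      (∑ i ∈ Finset.Icc 1 m, f p i) /
        ((∑ i ∈ Finset.Icc 1 m, p i) / ξ + (m : ℝ) * Pd + Ps) := by
    intro m p; rw [userEE, hcardIcc]
  have hNle : ∀ (k : ℕ), k ≤ n → ∀ (p : ℕ → ℝ),
      (∀ i ∈ Finset.Icc 1 k, p i ∈ Set.Icc 0 (Pmax i)) →
      (∑ i ∈ Finset.Icc 1 k, f p i) ≤
        E k * ((∑ i ∈ Finset.Icc 1 k, p i) / ξ + (k : ℝ) * Pd + Ps) := by
    intro k hkn p hp
    rcases Nat.eq_zero_or_pos k with rfl | hk1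
    · simp [hE0, Finset.Icc_eq_empty_of_lt (by norm_num : (0:ℕ) < 1)]
    · have hD := hDpos k p (fun i hi => (hp i hi).1)
      have hub := (hE k hk1 hkn).2 p hp
      rw [huEE] at hub
      calc (∑ i ∈ Finset.Icc 1 k, f p i)
          = ((∑ i ∈ Finset.Icc 1 k, f p i) /
              ((∑ i ∈ Finset.Icc 1 k, p i) / ξ + (k : ℝ) * Pd + Ps)) *
              ((∑ i ∈ Finset.Icc 1 k, p i) / ξ + (k : ℝ) * Pd + Ps) := by
            rw [div_mul_cancel₀ _ hD.ne']
        _ ≤ E k * ((∑ i ∈ Finset.Icc 1 k, p i) / ξ + (k : ℝ) * Pd + Ps) :=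
            mul_le_mul_of_nonneg_right hub hD.le
  obtain ⟨k, rfl⟩ : ∃ k, j = k + 1 := ⟨j - 1, by omega⟩
  simp only [Nat.add_sub_cancel] at hstop ⊢
  have claim2 : ∀ i, k + 1 ≤ i → i ≤ n → e i < E k := by
    intro i h1 h2
    exact lt_of_le_of_lt (hdesc (k + 1) i hj1 h1 h2) hstop
  refine ⟨?_, claim2, ?_⟩
  · -- part (i)
    intro m hm1 hmk
    obtain ⟨l, rfl⟩ : ∃ l, m = l + 1 := ⟨m - 1, by omega⟩
    simp only [Nat.add_sub_cancel]
    have hln : l + 1 ≤ n := by omega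
    have hle : E l ≤ e (l + 1) := by
      have h := hleast (l + 1) hm1 (by omega)
      simpa using h
    obtain ⟨p, hp, hN⟩ : ∃ p : ℕ → ℝ, (∀ i ∈ Finset.Icc 1 l, p i ∈ Set.Icc 0 (Pmax i)) ∧
        (∑ i ∈ Finset.Icc 1 l, f p i) =
          E l * ((∑ i ∈ Finset.Icc 1 l, p i) / ξ + (l : ℝ) * Pd + Ps) := by
      rcases Nat.eq_zero_or_pos l with rfl | hl1
      · exact ⟨fun _ => 0, by simp, by
          simp [hE0, Finset.Icc_eq_empty_of_lt (by norm_num : (0:ℕ) < 1)]⟩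
      · obtain ⟨p, hp, hpE⟩ := (hE l hl1 (by omega)).1
        refine ⟨p, hp, ?_⟩
        rw [huEE] at hpE
        have hD := hDpos l p (fun i hi => (hp i hi).1)
        rwa [div_eq_iff hD.ne'] at hpE
    have hD := hDpos l p (fun i hi => (hp i hi).1)
    obtain ⟨q, hq, hqe⟩ := (he (l + 1) (by omega) hln).1
    have hq0 : 0 ≤ q := hq.1
    have hd : 0 < q / ξ + Pd := by positivity
    have hr : ω * B * Real.logb 2 (1 + q * g (l + 1) / (Γ * σ2))
        = e (l + 1) * (q / ξ + Pd) := by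
      rw [linkEE] at hqe
      rwa [div_eq_iff hd.ne'] at hqe
    set p' : ℕ → ℝ := Function.update p (l + 1) q with hp'
    have hnotmem : (l + 1) ∉ Finset.Icc 1 l := by simp
    have hIcc : Finset.Icc 1 (l + 1) = insert (l + 1) (Finset.Icc 1 l) := by
      ext x; simp only [Finset.mem_Icc, Finset.mem_insert]; omega
    have hsame : ∀ i ∈ Finset.Icc 1 l, p' i = p i := by
      intro i hi
      have hne : i ≠ l + 1 := by simp only [Finset.mem_Icc] at hi; omega
      simp [hp', Function.update_of_ne hne]
    have hp'c : ∀ i ∈ Finset.Icc 1 (l + 1), p' i ∈ Set.Icc 0 (Pmax i) := by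
      intro i hi
      rw [hIcc, Finset.mem_insert] at hi
      rcases hi with rfl | hi
      · simpa [hp'] using hq
      · rw [hsame i hi]; exact hp i hi
    have hsumf : ∑ i ∈ Finset.Icc 1 (l + 1), f p' i
        = (∑ i ∈ Finset.Icc 1 l, f p i) + e (l + 1) * (q / ξ + Pd) := by
      rw [hIcc, Finset.sum_insert hnotmem, add_comm]
      congr 1
      · exact Finset.sum_congr rfl fun i hi => by simp only [hf]; rw [hsame i hi]
      · simp only [hf, hp', Function.update_self]; exact hr
    have hsump : ∑ i ∈ Finset.Icc 1 (l + 1), p' i = (∑ i ∈ Finset.Icc 1 l, p i) + q := by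
      rw [hIcc, Finset.sum_insert hnotmem, add_comm]
      congr 1
      · exact Finset.sum_congr rfl hsame
      · simp [hp']
    have key : E l ≤ userEE ω B Γ σ2 ξ Pd Ps (Finset.Icc 1 (l + 1)) g p' := by
      rw [huEE, hsumf, hsump]
      have hden : ((∑ i ∈ Finset.Icc 1 l, p i) + q) / ξ + ((l + 1 : ℕ) : ℝ) * Pd + Ps
          = ((∑ i ∈ Finset.Icc 1 l, p i) / ξ + (l : ℝ) * Pd + Ps) + (q / ξ + Pd) := by
        push_cast; ring
      rw [hden]
      exact med_le_s5 _ _ _ _ _ hD hd hN (mul_le_mul_of_nonneg_right hle hd.le)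
    exact key.trans ((hE (l + 1) (by omega) hln).2 p' hp'c)
  · -- part (iii)
    intro m hjm hmn
    obtain ⟨p, hp, hpE⟩ := (hE m (by omega) hmn).1
    have hkm : k ≤ m := by omega
    have hsub : ∀ i ∈ Finset.Icc 1 k, i ∈ Finset.Icc 1 m := by
      intro i hi; simp only [Finset.mem_Icc] at hi ⊢; omega
    have hN := hNle k (by omega) p (fun i hi => hp i (hsub i hi))
    have hD := hDpos k p (fun i hi => (hp i (hsub i hi)).1)
    have hsplit : ∀ F : ℕ → ℝ, ∑ i ∈ Finset.Icc 1 m, F i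
        = (∑ i ∈ Finset.Icc 1 k, F i) + ∑ i ∈ Finset.Ioc k m, F i := by
      intro F
      rw [show Finset.Icc 1 m = Finset.Ioc 0 m from Finset.Icc_add_one_left_eq_Ioc 0 m,
        show Finset.Icc 1 k = Finset.Ioc 0 k from Finset.Icc_add_one_left_eq_Ioc 0 k,
        Finset.sum_Ioc_consecutive F (Nat.zero_le k) hkm]
    have hne : (Finset.Ioc k m).Nonempty := by rw [Finset.nonempty_Ioc]; omega
    have hmemIcc : ∀ i ∈ Finset.Ioc k m, i ∈ Finset.Icc 1 m := by
      intro i hi; simp only [Finset.mem_Ioc] at hi; simp only [Finset.mem_Icc]; omega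
    have hdpos : ∀ i ∈ Finset.Ioc k m, 0 < p i / ξ + Pd := by
      intro i hi
      have h1 : 0 ≤ p i := (hp i (hmemIcc i hi)).1
      positivity
    have hDd : 0 < ∑ i ∈ Finset.Ioc k m, (p i / ξ + Pd) := Finset.sum_pos hdpos hne
    have hR : (∑ i ∈ Finset.Ioc k m, f p i)
        < E k * ∑ i ∈ Finset.Ioc k m, (p i / ξ + Pd) := by
      rw [Finset.mul_sum]
      apply Finset.sum_lt_sum_of_nonempty hne
      intro i hi
      have hdi := hdpos i hi
      rw [Finset.mem_Ioc] at hi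
      have hi1 : 1 ≤ i := by omega
      have hin : i ≤ n := by omega
      have hub := (he i hi1 hin).2 (p i) (hp i (by simp only [Finset.mem_Icc]; omega))
      rw [linkEE, div_le_iff₀ hdi] at hub
      have h2 : e i < E k := claim2 i (by omega) hin
      calc f p i ≤ e i * (p i / ξ + Pd) := hub
        _ < E k * (p i / ξ + Pd) := by nlinarith
    have hDdsum : ∑ i ∈ Finset.Ioc k m, (p i / ξ + Pd)
        = (∑ i ∈ Finset.Ioc k m, p i) / ξ + ((m - k : ℕ) : ℝ) * Pd := by
      rw [Finset.sum_add_distrib, ← Finset.sum_div, Finset.sum_const, Nat.card_Ioc,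
        nsmul_eq_mul]
    rw [huEE, hsplit (f p), hsplit p] at hpE
    have hden : ((∑ i ∈ Finset.Icc 1 k, p i) + ∑ i ∈ Finset.Ioc k m, p i) / ξ
          + (m : ℝ) * Pd + Ps
        = ((∑ i ∈ Finset.Icc 1 k, p i) / ξ + (k : ℝ) * Pd + Ps)
          + ∑ i ∈ Finset.Ioc k m, (p i / ξ + Pd) := by
      rw [hDdsum, Nat.cast_sub hkm]; ring
    rw [hden] at hpE
    rw [← hpE]
    exact med_lt_s5 (E k) _ _ _ _ hD hDd hN hR
end

section
/- Fix ω, B, g, Γ, σ², c > 0 and ξ ∈ (0,1], and let f(p) = ω·B·log₂(1 + p·g/(Γσ²)) / (p/ξ + c) for p ≥ 0. If 0 < p* < P_max and p* maximizes f on the interval [0, P_max], then p* satisfies the first-order characterization p* = ω·B·ξ/(f(p*)·ln 2) − Γσ²/g. (Equation (13) of the paper: the optimal power allocation of a link satisfies the energy-efficient water-filling formula.) -/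
/-!
At an interior maximum of a ratio `N / D` the derivative vanishes, i.e. `N' = (N / D) · D'`.
For the link EE, `N' = ωB·a / ((1 + p a) ln 2)` with `a = g / (Γσ²)` and `D' = 1 / ξ`, so
`f(p*) = ωBξ·a / ((1 + p* a) ln 2)`, which solved for `p*` is the water-filling formula.
-/

open Real

theorem IsLocalMax.hasDerivAt_div_eq_mul {N D : ℝ → ℝ} {x N' D' : ℝ}
    (hmax : IsLocalMax (fun y => N y / D y) x) (hN : HasDerivAt N N' x)
    (hD : HasDerivAt D D' x) (hDx : D x ≠ 0) :
    N' = N x / D x * D' := by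
  have hcrit := hmax.hasDerivAt_eq_zero (hN.div hD hDx)
  rw [div_eq_zero_iff, sub_eq_zero] at hcrit
  rw [div_mul_eq_mul_div, eq_div_iff hDx]
  exact hcrit.resolve_right (pow_ne_zero 2 hDx)

theorem hasDerivAt_logb_one_add_mul (b a : ℝ) {x : ℝ} (hx : 1 + x * a ≠ 0) :
    HasDerivAt (fun y => logb b (1 + y * a)) (a / ((1 + x * a) * log b)) x := by
  have h := ((((hasDerivAt_id x).mul_const a).const_add 1).log hx).div_const (log b)
  simpa [logb, div_div] using h

theorem linkEE_interior_maximizer_waterfilling_general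
    (ω B g Γ σ2 c ξ Pmax pstar : ℝ)
    (hω : 0 < ω) (hB : 0 < B) (hg : 0 < g) (hΓ : 0 < Γ) (hσ2 : 0 < σ2)
    (hc : 0 < c) (hξ0 : 0 < ξ)
    (f : ℝ → ℝ)
    (hf : ∀ p, f p = ω * B * Real.logb 2 (1 + p * g / (Γ * σ2)) / (p / ξ + c))
    (h0 : 0 < pstar) (h1 : pstar < Pmax)
    (hmax : ∀ p ∈ Set.Icc (0 : ℝ) Pmax, f p ≤ f pstar) :
    pstar = ω * B * ξ / (f pstar * Real.log 2) - Γ * σ2 / g := by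
  set a := g / (Γ * σ2) with ha
  have hsnr : 0 < 1 + pstar * a := by positivity
  have hfun : f = fun p => ω * B * logb 2 (1 + p * a) / (p / ξ + c) :=
    funext fun p => by rw [hf, mul_div_assoc p]
  have hloc : IsLocalMax f pstar := Filter.eventually_of_mem (Icc_mem_nhds h0 h1) hmax
  have hfoc : ω * B * (a / ((1 + pstar * a) * log 2)) = f pstar * (1 / ξ) := by
    rw [hfun] at hloc ⊢
    exact hloc.hasDerivAt_div_eq_mul ((hasDerivAt_logb_one_add_mul 2 a hsnr.ne').const_mul _)
      (((hasDerivAt_id pstar).div_const ξ).add_const c) (by positivity)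
  have hf_eq : f pstar = ω * B * ξ * a / ((1 + pstar * a) * log 2) := by
    field_simp at hfoc ⊢
    linarith
  rw [hf_eq, ha]
  field_simp
  ring

/-- Equation (13) of the paper: if `p*` is an interior maximizer of the link EE
`f(p) = ω·B·log₂(1 + p·g/(Γσ²))/(p/ξ + c)` on `[0, P_max]`, then it satisfies the
energy-efficient water-filling formula `p* = ω·B·ξ/(f(p*)·ln 2) − Γσ²/g`. -/
theorem linkEE_interior_maximizer_waterfilling
    (ω B g Γ σ2 c ξ Pmax pstar : ℝ)
    (hω : 0 < ω) (hB : 0 < B) (hg : 0 < g) (hΓ : 0 < Γ) (hσ2 : 0 < σ2)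
    (hc : 0 < c) (hξ0 : 0 < ξ) (hξ1 : ξ ≤ 1) (hPmax : 0 < Pmax)
    (f : ℝ → ℝ)
    (hf : ∀ p, f p = ω * B * Real.logb 2 (1 + p * g / (Γ * σ2)) / (p / ξ + c))
    (h0 : 0 < pstar) (h1 : pstar < Pmax)
    (hmax : ∀ p ∈ Set.Icc (0 : ℝ) Pmax, f p ≤ f pstar) :
    pstar = ω * B * ξ / (f pstar * Real.log 2) - Γ * σ2 / g :=
  linkEE_interior_maximizer_waterfilling_general ω B g Γ σ2 c ξ Pmax pstar hω hB hg hΓ hσ2 hc hξ0 f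
    hf h0 h1 hmax
end

section
/- Fix A, a, b, c > 0 and let f(p) = A·log(1 + a·p)/(b·p + c) for p ≥ 0. Then f has a unique critical point p₀ ∈ (0, ∞) (i.e., a unique solution of f′(p₀) = 0 on (0,∞)), f is strictly increasing on [0, p₀] and strictly decreasing on [p₀, ∞), and p₀ is the unique global maximizer of f on [0, ∞). In particular, any stationary point of the link EE is its optimal point. -/
/-!
Writing `f = A·u/v` with `u = log (1 + a p)` and `v = b p + c`, one finds
`f' = A·N/v²` with `N p = a (b p + c)/(1 + a p) - b log (1 + a p)`. Since
`N' = -a² (b p + c)/(1 + a p)² < 0`, `N` decreases strictly from `N 0 = a c > 0` and is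
eventually negative (its first term stays below `b + a c` while the logarithm is unbounded),
so it has exactly one zero `p₀ > 0`. Hence `f' > 0` on `(0, p₀)`, `f' < 0` on `(p₀, ∞)`,
and `p₀` is the unique critical point and the strict global maximizer.
-/

open Real Set

/-- The numerator of the derivative of `p ↦ A log (1 + a p) / (b p + c)`, divided by `A`. -/
noncomputable def linkEENumer (a b c p : ℝ) : ℝ :=
  a * (b * p + c) / (1 + a * p) - b * log (1 + a * p)

theorem StrictMonoOn.lt_of_strictAntiOn_Ici {α β : Type*} [LinearOrder α] [Preorder β]
    {f : α → β} {x₀ m x : α} (hmono : StrictMonoOn f (Icc x₀ m))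
    (hanti : StrictAntiOn f (Ici m)) (hx : x₀ ≤ x) (hxm : x ≠ m) : f x < f m := by
  rcases hxm.lt_or_gt with hlt | hgt
  · exact hmono ⟨hx, hlt.le⟩ ⟨hx.trans hlt.le, le_rfl⟩ hlt
  · exact hanti (mem_Ici.2 le_rfl) hgt.le hgt

theorem strictMonoOn_Icc_strictAntiOn_Ici_of_hasDerivAt {f f' : ℝ → ℝ} {x₀ m : ℝ}
    (hm : x₀ ≤ m) (hf : ∀ x, x₀ ≤ x → HasDerivAt f (f' x) x)
    (hpos : ∀ x, x₀ < x → x < m → 0 < f' x) (hneg : ∀ x, m < x → f' x < 0) :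
    StrictMonoOn f (Icc x₀ m) ∧ StrictAntiOn f (Ici m) := by
  constructor
  · refine strictMonoOn_of_hasDerivWithinAt_pos (f' := f') (convex_Icc x₀ m)
      (fun x hx ↦ (hf x hx.1).continuousAt.continuousWithinAt) (fun x hx ↦ ?_) (fun x hx ↦ ?_)
    all_goals rw [interior_Icc] at hx
    · exact (hf x hx.1.le).hasDerivWithinAt
    · exact hpos x hx.1 hx.2
  · refine strictAntiOn_of_hasDerivWithinAt_neg (f' := f') (convex_Ici m)
      (fun x hx ↦ (hf x (hm.trans hx)).continuousAt.continuousWithinAt) (fun x hx ↦ ?_)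
      (fun x hx ↦ ?_)
    all_goals rw [interior_Ici] at hx
    · exact (hf x (hm.trans hx.le)).hasDerivWithinAt
    · exact hneg x hx

section

variable {a b c p : ℝ}

theorem hasDerivAt_mul_log_div (A : ℝ) (hp : 1 + a * p ≠ 0) (hq : b * p + c ≠ 0) :
    HasDerivAt (fun p ↦ A * log (1 + a * p) / (b * p + c))
      (A / (b * p + c) ^ 2 * linkEENumer a b c p) p := by
  have hlog := ((hasDerivAt_const_mul a).const_add 1).log hp
  refine ((hlog.const_mul A).div ((hasDerivAt_const_mul b).add_const c) hq).congr_deriv ?_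
  simp only [linkEENumer]
  field_simp

theorem hasDerivAt_linkEENumer (hp : 1 + a * p ≠ 0) :
    HasDerivAt (linkEENumer a b c) (-(a ^ 2 * (b * p + c)) / (1 + a * p) ^ 2) p := by
  have hu : HasDerivAt (fun p ↦ 1 + a * p) a p := (hasDerivAt_const_mul a).const_add 1
  have hv : HasDerivAt (fun p ↦ a * (b * p + c)) (a * b) p :=
    ((hasDerivAt_const_mul b).add_const c).const_mul a
  refine ((hv.div hu hp).sub ((hu.log hp).const_mul b)).congr_deriv ?_
  field_simp
  ring

theorem linkEENumer_zero : linkEENumer a b c 0 = a * c := by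
  simp [linkEENumer]

theorem strictAntiOn_linkEENumer (ha : 0 < a) (hb : 0 ≤ b) (hc : 0 < c) :
    StrictAntiOn (linkEENumer a b c) (Ici 0) := by
  have hderiv : ∀ x ∈ Ici (0 : ℝ), HasDerivAt (linkEENumer a b c)
      (-(a ^ 2 * (b * x + c)) / (1 + a * x) ^ 2) x := fun x hx ↦
    hasDerivAt_linkEENumer (by have : (0 : ℝ) ≤ x := hx; positivity)
  refine strictAntiOn_of_hasDerivWithinAt_neg (convex_Ici 0)
    (fun x hx ↦ (hderiv x hx).continuousAt.continuousWithinAt)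
    (fun x hx ↦ (hderiv x (interior_subset hx)).hasDerivWithinAt) (fun x hx ↦ ?_)
  rw [interior_Ici, mem_Ioi] at hx
  have : 0 < a ^ 2 * (b * x + c) / (1 + a * x) ^ 2 := by positivity
  rwa [neg_div, neg_lt_zero]

theorem exists_linkEENumer_neg (ha : 0 < a) (hb : 0 < b) (hc : 0 ≤ c) :
    ∃ p, 0 ≤ p ∧ linkEENumer a b c p < 0 := by
  -- The first term stays below `b + a c`, so pick `p` with `b log (1 + a p) = b + a c`.
  set L := 1 + a * c / b
  set p := (exp L - 1) / a
  have hp : 0 ≤ p := div_nonneg (sub_nonneg.2 (one_le_exp (by positivity))) ha.le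
  refine ⟨p, hp, ?_⟩
  have h1p : 1 + a * p = exp L := by simp only [p]; field_simp; ring
  have hfirst : a * (b * p + c) / (1 + a * p) < b + a * c := by
    rw [div_lt_iff₀ (by positivity)]
    nlinarith [mul_nonneg (mul_nonneg (sq_nonneg a) hc) hp]
  have hsecond : b * log (1 + a * p) = b + a * c := by
    rw [h1p, log_exp]; simp only [L]; field_simp
  simp only [linkEENumer]
  linarith

theorem exists_pos_linkEENumer_eq_zero (ha : 0 < a) (hb : 0 < b) (hc : 0 < c) :
    ∃ p₀, 0 < p₀ ∧ linkEENumer a b c p₀ = 0 := by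
  obtain ⟨q, hq, hNq⟩ := exists_linkEENumer_neg ha hb hc.le
  have hcont : ContinuousOn (linkEENumer a b c) (Icc 0 q) := fun x hx ↦
    (hasDerivAt_linkEENumer (b := b) (c := c)
      (by have : 0 ≤ x := hx.1; positivity)).continuousAt.continuousWithinAt
  have hN0 : 0 < linkEENumer a b c 0 := by rw [linkEENumer_zero]; positivity
  obtain ⟨p₀, hp₀, hNp₀⟩ := intermediate_value_Icc' hq hcont ⟨hNq.le, hN0.le⟩
  refine ⟨p₀, hp₀.1.lt_of_ne ?_, hNp₀⟩
  rintro rfl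
  exact hN0.ne' hNp₀

end

/-- The general link EE `f(p) = A·log(1 + a·p)/(b·p + c)` has a unique critical
point `p₀` on `(0, ∞)`, is strictly increasing on `[0, p₀]` and strictly decreasing
on `[p₀, ∞)`, and `p₀` is the unique global maximizer of `f` on `[0, ∞)`: any
stationary point of the link EE is its optimal point. -/
theorem linkEE_unique_stationary_is_global_max
    (A a b c : ℝ) (hA : 0 < A) (ha : 0 < a) (hb : 0 < b) (hc : 0 < c)
    (f : ℝ → ℝ) (hf : ∀ p, f p = A * Real.log (1 + a * p) / (b * p + c)) :
    ∃ p0 : ℝ, 0 < p0 ∧ deriv f p0 = 0 ∧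
      (∀ q, 0 < q → deriv f q = 0 → q = p0) ∧
      StrictMonoOn f (Set.Icc 0 p0) ∧ StrictAntiOn f (Set.Ici p0) ∧
      ∀ p, 0 ≤ p → p ≠ p0 → f p < f p0 := by
  obtain ⟨p0, hp0, hNp0⟩ := exists_pos_linkEENumer_eq_zero ha hb hc
  have hN := strictAntiOn_linkEENumer ha hb.le hc
  set N := linkEENumer a b c
  have hderiv : ∀ p, 0 ≤ p → HasDerivAt f (A / (b * p + c) ^ 2 * N p) p := fun p hp ↦ by
    rw [funext hf]
    exact hasDerivAt_mul_log_div A (by positivity) (by positivity)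
  have hscale : ∀ p, 0 ≤ p → 0 < A / (b * p + c) ^ 2 := fun p hp ↦ by positivity
  obtain ⟨hmono, hanti⟩ := strictMonoOn_Icc_strictAntiOn_Ici_of_hasDerivAt hp0.le hderiv
    (fun x hx hxp ↦ mul_pos (hscale x hx.le) (hNp0 ▸ hN hx.le hp0.le hxp))
    (fun x hxp ↦ mul_neg_of_pos_of_neg (hscale x (hp0.le.trans hxp.le))
      (hNp0 ▸ hN hp0.le (hp0.le.trans hxp.le) hxp))
  refine ⟨p0, hp0, by rw [(hderiv p0 hp0.le).deriv, hNp0, mul_zero], fun q hq hq' ↦ ?_,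
    hmono, hanti, fun p hp hpp0 ↦ hmono.lt_of_strictAntiOn_Ici hanti hp hpp0⟩
  rw [(hderiv q hq.le).deriv, mul_eq_zero, or_iff_right (hscale q hq.le).ne'] at hq'
  exact hN.injOn hq.le hp0.le (hq'.trans hNp0.symm)
end

section
/- Let n ≥ 1, and fix A_i > 0 and a_i > 0 for i = 1, …, n, and b > 0, c > 0. Define F(p) = (Σ_{i=1}^n A_i·log₂(1 + a_i·p_i)) / (b·Σ_{i=1}^n p_i + c) on the nonnegative orthant [0,∞)^n. Then F is strictly quasiconcave on [0,∞)^n: for all p ≠ q in [0,∞)^n and all λ ∈ (0,1), F(λp + (1−λ)q) > min(F(p), F(q)). -/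
/-!
The numerator `N p = Σ_i A_i log₂(1 + a_i p_i)` is a sum of strictly concave functions of
separate coordinates, hence strictly concave on the orthant, and the denominator `D` is affine
and positive there. With `m = min (F p) (F q)` we have `m D ≤ N` at `p` and `q`; since `m D` is
affine and `N` strictly concave, `m D < N` strictly between them.
-/

open Real Set

variable {𝕜 E : Type*} [Field 𝕜] [LinearOrder 𝕜] [IsStrictOrderedRing 𝕜]
  [AddCommGroup E] [Module 𝕜 E]

variable (𝕜) in
def StrictQuasiconcaveOn {β : Type*} [LinearOrder β] (s : Set E) (f : E → β) : Prop :=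
  Convex 𝕜 s ∧ ∀ ⦃x⦄, x ∈ s → ∀ ⦃y⦄, y ∈ s → x ≠ y → ∀ ⦃a b : 𝕜⦄, 0 < a → 0 < b → a + b = 1 →
    min (f x) (f y) < f (a • x + b • y)

theorem StrictConcaveOn.strictQuasiconcaveOn_div {s : Set E} {f : E → 𝕜}
    (hf : StrictConcaveOn 𝕜 s f) (g : E →ᵃ[𝕜] 𝕜) (hg : ∀ x ∈ s, 0 < g x) :
    StrictQuasiconcaveOn 𝕜 s fun x => f x / g x := by
  refine ⟨hf.1, fun x hx y hy hxy a b ha hb hab => ?_⟩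
  set m := min (f x / g x) (f y / g y)
  have hmx : m * g x ≤ f x := (le_div_iff₀ (hg x hx)).1 (min_le_left _ _)
  have hmy : m * g y ≤ f y := (le_div_iff₀ (hg y hy)).1 (min_le_right _ _)
  refine (lt_div_iff₀ (hg _ (hf.1 hx hy ha.le hb.le hab))).2 ?_
  calc m * g (a • x + b • y) = a * (m * g x) + b * (m * g y) := by
        rw [Convex.combo_affine_apply hab, smul_eq_mul, smul_eq_mul]; ring
    _ ≤ a • f x + b • f y := by simp only [smul_eq_mul]; gcongr
    _ < f (a • x + b • y) := hf.2 hx hy hxy ha hb hab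

theorem strictConcaveOn_univ_pi_sum {𝕜 ι β : Type*} {F : ι → Type*} [Semiring 𝕜]
    [PartialOrder 𝕜] [Fintype ι] [∀ i, AddCommGroup (F i)] [∀ i, Module 𝕜 (F i)]
    [AddCommMonoid β] [PartialOrder β] [IsOrderedCancelAddMonoid β] [Module 𝕜 β] {s : ∀ i, Set (F i)} {h : ∀ i, F i → β}
    (hh : ∀ i, StrictConcaveOn 𝕜 (s i) (h i)) :
    StrictConcaveOn 𝕜 (univ.pi s) fun x => ∑ i, h i (x i) := by
  refine ⟨convex_pi fun i _ => (hh i).1, fun x hx y hy hxy a b ha hb hab => ?_⟩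
  rw [mem_univ_pi] at hx hy
  obtain ⟨j, hj⟩ := Function.ne_iff.1 hxy
  rw [Finset.smul_sum, Finset.smul_sum, ← Finset.sum_add_distrib]
  exact Finset.sum_lt_sum (fun i _ => (hh i).concaveOn.2 (hx i) (hy i) ha.le hb.le hab)
    ⟨j, Finset.mem_univ j, (hh j).2 (hx j) (hy j) hj ha hb hab⟩

theorem strictConcaveOn_mul_logb_one_add_mul {B A a : ℝ} (hB : 1 < B) (hA : 0 < A) (ha : 0 < a) :
    StrictConcaveOn ℝ (Ici 0) fun t => A * logb B (1 + a * t) := by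
  refine ⟨convex_Ici 0, fun x hx y hy hxy s t hs ht hst => ?_⟩
  have hpos : ∀ z ∈ Ici (0 : ℝ), 1 + a * z ∈ Ioi 0 := fun z hz => by
    simp only [mem_Ici, mem_Ioi] at hz ⊢; positivity
  have hlog := strictConcaveOn_log_Ioi.2 (hpos x hx) (hpos y hy)
    (by simpa [ha.ne'] using hxy) hs ht hst
  have hcombo : s * (1 + a * x) + t * (1 + a * y) = 1 + a * (s * x + t * y) := by
    linear_combination hst
  have hAB : 0 < A / log B := div_pos hA (log_pos hB)
  simp only [logb, smul_eq_mul] at hlog ⊢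
  rw [hcombo] at hlog
  calc s * (A * (log (1 + a * x) / log B)) + t * (A * (log (1 + a * y) / log B))
      = A / log B * (s * log (1 + a * x) + t * log (1 + a * y)) := by ring
    _ < A / log B * log (1 + a * (s * x + t * y)) := by gcongr
    _ = A * (log (1 + a * (s * x + t * y)) / log B) := by ring

theorem userEE_strictly_quasiconcave_general
    (n : ℕ) (A a : Fin n → ℝ) (b c : ℝ)
    (hA : ∀ i, 0 < A i) (ha : ∀ i, 0 < a i) (hb : 0 < b) (hc : 0 < c)
    (F : (Fin n → ℝ) → ℝ)
    (hF : ∀ p : Fin n → ℝ,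
      F p = (∑ i, A i * Real.logb 2 (1 + a i * p i)) / (b * ∑ i, p i + c)) :
    ∀ p q : Fin n → ℝ, (∀ i, 0 ≤ p i) → (∀ i, 0 ≤ q i) → p ≠ q →
      ∀ l : ℝ, l ∈ Set.Ioo (0 : ℝ) 1 →
        min (F p) (F q) < F (fun i => l * p i + (1 - l) * q i) := by
  intro p q hp hq hpq l ⟨hl0, hl1⟩
  let D : (Fin n → ℝ) →ᵃ[ℝ] ℝ :=
    (b • ∑ i, LinearMap.proj (R := ℝ) (φ := fun _ : Fin n => ℝ) i).toAffineMap
      + AffineMap.const ℝ (Fin n → ℝ) c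
  have hD : ∀ x, D x = b * ∑ i, x i + c := fun x => by simp [D]
  have hD_pos : ∀ x ∈ univ.pi fun _ => Ici (0 : ℝ), 0 < D x := fun x hx => by
    rw [hD]
    have : 0 ≤ ∑ i, x i := Finset.sum_nonneg fun i _ => mem_univ_pi.1 hx i
    positivity
  have hEE : StrictQuasiconcaveOn ℝ (univ.pi fun _ => Ici 0)
      fun x : Fin n → ℝ => (∑ i, A i * logb 2 (1 + a i * x i)) / D x :=
    (strictConcaveOn_univ_pi_sum fun i =>
      strictConcaveOn_mul_logb_one_add_mul one_lt_two (hA i) (ha i)).strictQuasiconcaveOn_div D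
      hD_pos
  have hlt := hEE.2 (mem_univ_pi.2 hp) (mem_univ_pi.2 hq) hpq hl0 (sub_pos.2 hl1) (add_sub_cancel l 1)
  simpa only [hF, hD, Pi.add_apply, Pi.smul_apply, smul_eq_mul] using hlt

/-- The user energy efficiency
`F(p) = (Σ_i A_i·log₂(1 + a_i·p_i)) / (b·Σ_i p_i + c)` is strictly quasiconcave on
the nonnegative orthant: for distinct nonnegative power vectors `p ≠ q` and any
`λ ∈ (0,1)`, `F(λp + (1−λ)q) > min (F p) (F q)`. -/
theorem userEE_strictly_quasiconcave
    (n : ℕ) (hn : 1 ≤ n) (A a : Fin n → ℝ) (b c : ℝ)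
    (hA : ∀ i, 0 < A i) (ha : ∀ i, 0 < a i) (hb : 0 < b) (hc : 0 < c)
    (F : (Fin n → ℝ) → ℝ)
    (hF : ∀ p : Fin n → ℝ,
      F p = (∑ i, A i * Real.logb 2 (1 + a i * p i)) / (b * ∑ i, p i + c)) :
    ∀ p q : Fin n → ℝ, (∀ i, 0 ≤ p i) → (∀ i, 0 ≤ q i) → p ≠ q →
      ∀ l : ℝ, l ∈ Set.Ioo (0 : ℝ) 1 →
        min (F p) (F q) < F (fun i => l * p i + (1 - l) * q i) :=
  userEE_strictly_quasiconcave_general n A a b c hA ha hb hc F hF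
end

section
/- Fix ω, B, Γ, σ², c > 0, ξ ∈ (0,1], gains g_i > 0 and peak powers P_max,i > 0 for i = 1, …, n, and let F(p) = (Σ_{i=1}^n ω·B·log₂(1 + p_i·g_i/(Γσ²))) / ((Σ_{i=1}^n p_i)/ξ + c) on the box ∏_{i=1}^n [0, P_max,i]. If p* maximizes F over the box and coordinate i satisfies 0 < p*_i < P_max,i, then p*_i = ω·B·ξ/(F(p*)·ln 2) − Γσ²/g_i. (Equation (15) of the paper: the optimal power allocation maximizing the user EE satisfies the energy-efficient water-filling formula in every interior coordinate.) -/
/-!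
Freeze every coordinate of the maximizer except the `i`-th. Along that line the efficiency is a
ratio `N(t) / D(t)` of the rate `ω·B·log₂(1 + t·gᵢ/(Γσ²)) + const` and the affine power
`(t + const)/ξ + c`, and it has an interior local maximum at `p*ᵢ`. Fermat's theorem for a
ratio says that at such a point `N/D = N'/D'`, i.e. `F(p*) = ξ·ω·B/((Γσ²/gᵢ + p*ᵢ)·ln 2)`, which
is the water-filling formula solved for `p*ᵢ`.
-/

open Finset Function Filter Topology Real

theorem Fintype.sum_apply_update {ι α M : Type*} [Fintype ι] [DecidableEq ι] [AddCommMonoid M]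
    (h : ι → α → M) (p : ι → α) (i : ι) (t : α) :
    ∑ j, h j (update p i t j) = h i t + ∑ j ∈ univ \ {i}, h j (p j) := by
  rw [← sum_update_of_mem (mem_univ i)]
  exact Finset.sum_congr rfl fun j _ => apply_update h p i t j

theorem IsMaxOn.isLocalMax_update {ι α β : Type*} [DecidableEq ι] [TopologicalSpace α]
    [Preorder β] {s : ι → Set α} {f : (ι → α) → β} {p : ι → α}
    (hmax : IsMaxOn f (Set.univ.pi s) p) (hp : ∀ j, p j ∈ s j) {i : ι} (hi : s i ∈ 𝓝 (p i)) :
    IsLocalMax (fun t => f (update p i t)) (p i) := by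
  filter_upwards [hi] with t ht
  rw [update_eq_self]
  refine hmax (Set.mem_univ_pi.2 fun j => ?_)
  by_cases hj : j = i
  · subst hj
    simpa using ht
  · simpa [hj] using hp j

theorem IsLocalExtr.div_eq_div_of_hasDerivAt {N D : ℝ → ℝ} {x N' D' : ℝ}
    (h : IsLocalExtr (fun t => N t / D t) x) (hN : HasDerivAt N N' x) (hD : HasDerivAt D D' x)
    (hDx : D x ≠ 0) (hD' : D' ≠ 0) : N x / D x = N' / D' := by
  have hcrit := h.hasDerivAt_eq_zero (hN.div hD hDx)
  rw [div_eq_zero_iff, sub_eq_zero] at hcrit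
  rw [div_eq_div_iff hDx hD']
  rcases hcrit with hcrit | hcrit
  · exact hcrit.symm
  · exact absurd hcrit (pow_ne_zero 2 hDx)

theorem hasDerivAt_mul_logb_one_add_mul_div (a : ℝ) {g K t : ℝ} (hg : g ≠ 0) (hK : K ≠ 0)
    (ht : K / g + t ≠ 0) :
    HasDerivAt (fun x => a * logb 2 (1 + x * g / K)) (a / ((K / g + t) * log 2)) t := by
  have hlin : HasDerivAt (fun x => 1 + x * g / K) (g / K) t := by
    simpa using (((hasDerivAt_id t).mul_const g).div_const K).const_add 1
  have hne : 1 + t * g / K ≠ 0 := by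
    rw [show 1 + t * g / K = g / K * (K / g + t) by field_simp]
    exact mul_ne_zero (div_ne_zero hg hK) ht
  refine (((hlin.log hne).div_const (log 2)).const_mul a).congr_deriv ?_
  field_simp

theorem userEE_interior_maximizer_waterfilling_general
    (n : ℕ) (ω B Γ σ2 ξ c : ℝ)
    (hω : 0 < ω) (hB : 0 < B) (hΓ : 0 < Γ) (hσ2 : 0 < σ2)
    (hξ0 : 0 < ξ) (hc : 0 < c)
    (g Pmax : Fin n → ℝ) (hg : ∀ i, 0 < g i)
    (F : (Fin n → ℝ) → ℝ)
    (hF : ∀ p : Fin n → ℝ,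
      F p = (∑ i, ω * B * Real.logb 2 (1 + p i * g i / (Γ * σ2))) /
        ((∑ i, p i) / ξ + c))
    (pstar : Fin n → ℝ) (hbox : ∀ i, pstar i ∈ Set.Icc 0 (Pmax i))
    (hmax : ∀ p : Fin n → ℝ, (∀ i, p i ∈ Set.Icc 0 (Pmax i)) → F p ≤ F pstar)
    (i : Fin n) (h0 : 0 < pstar i) (h1 : pstar i < Pmax i) :
    pstar i = ω * B * ξ / (F pstar * Real.log 2) - Γ * σ2 / g i := by
  set K := Γ * σ2
  have hK : 0 < K := mul_pos hΓ hσ2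
  set A := ∑ j ∈ univ \ {i}, ω * B * logb 2 (1 + pstar j * g j / K)
  set S := ∑ j ∈ univ \ {i}, pstar j
  have hS : 0 ≤ S := sum_nonneg fun j _ => (hbox j).1
  have hline : (fun t => F (update pstar i t)) =
      fun t => (ω * B * logb 2 (1 + t * g i / K) + A) / ((t + S) / ξ + c) := by
    funext t
    rw [hF, Fintype.sum_apply_update (fun j x => ω * B * logb 2 (1 + x * g j / K)),
      Fintype.sum_apply_update (fun _ x => x)]
  have hloc : IsLocalMax (fun t => (ω * B * logb 2 (1 + t * g i / K) + A) / ((t + S) / ξ + c))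
      (pstar i) :=
    hline ▸ (isMaxOn_iff.2 fun q hq => hmax q (Set.mem_univ_pi.1 hq)).isLocalMax_update hbox
      (Icc_mem_nhds h0 h1)
  have hrate := hasDerivAt_mul_logb_one_add_mul_div (ω * B) (hg i).ne' hK.ne'
    (by have := hg i; positivity : K / g i + pstar i ≠ 0)
  have hpower : HasDerivAt (fun t => (t + S) / ξ + c) (1 / ξ) (pstar i) := by
    simpa using (((hasDerivAt_id (pstar i)).add_const S).div_const ξ).add_const c
  have hratio := IsLocalExtr.div_eq_div_of_hasDerivAt hloc.isExtr (hrate.add_const A) hpower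
    (by positivity) (by positivity)
  have hFp : F pstar = (ω * B * logb 2 (1 + pstar i * g i / K) + A) / ((pstar i + S) / ξ + c) := by
    simpa using congrFun hline (pstar i)
  rw [hFp, hratio]
  field_simp
  ring

/-- Equation (15) of the paper: if `p*` maximizes the user EE
`F(p) = (Σ_i ω·B·log₂(1 + p_i·g_i/(Γσ²))) / ((Σ_i p_i)/ξ + c)` over the power box
`∏_i [0, Pmax_i]` and coordinate `i` is interior (`0 < p*_i < Pmax_i`), then
`p*_i = ω·B·ξ/(F(p*)·ln 2) − Γσ²/g_i` (energy-efficient water-filling). -/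
theorem userEE_interior_maximizer_waterfilling
    (n : ℕ) (ω B Γ σ2 ξ c : ℝ)
    (hω : 0 < ω) (hB : 0 < B) (hΓ : 0 < Γ) (hσ2 : 0 < σ2)
    (hξ0 : 0 < ξ) (hξ1 : ξ ≤ 1) (hc : 0 < c)
    (g Pmax : Fin n → ℝ) (hg : ∀ i, 0 < g i) (hPm : ∀ i, 0 < Pmax i)
    (F : (Fin n → ℝ) → ℝ)
    (hF : ∀ p : Fin n → ℝ,
      F p = (∑ i, ω * B * Real.logb 2 (1 + p i * g i / (Γ * σ2))) /
        ((∑ i, p i) / ξ + c))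
    (pstar : Fin n → ℝ) (hbox : ∀ i, pstar i ∈ Set.Icc 0 (Pmax i))
    (hmax : ∀ p : Fin n → ℝ, (∀ i, p i ∈ Set.Icc 0 (Pmax i)) → F p ≤ F pstar)
    (i : Fin n) (h0 : 0 < pstar i) (h1 : pstar i < Pmax i) :
    pstar i = ω * B * ξ / (F pstar * Real.log 2) - Γ * σ2 / g i :=
  userEE_interior_maximizer_waterfilling_general n ω B Γ σ2 ξ c hω hB hΓ hσ2 hξ0 hc g Pmax hg F hF
    pstar hbox hmax i h0 h1
end

section
/- Consider a system configuration Φ in which user k is scheduled with active link set S_k, and let i ∉ S_k be a further link of user k with optimal link EE ee*_{k,i}. If EE*_Φ ≤ ee*_{k,i}, then EE*_Φ ≤ EE*_{Φ'} ≤ ee*_{k,i}, where Φ' is the configuration obtained from Φ by additionally activating link i for user k. In particular, if Φ maximizes the system EE over all configurations and EE*_Φ ≤ EE*_{Φ*_k} ≤ ee*_{k,i} (that is, user k is beneficially scheduled and link i is active in user k's individual optimum), then EE*_{Φ'} = EE*_Φ, so activating link i also attains the maximum system EE. (Theorem 2, part 2, of the paper: if a user is scheduled, then all links active in its optimal user EE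 are also activated in maximizing the system EE.) -/
/-- The system energy efficiency of a configuration with scheduled user set `U`,
per-user active link sets `S`, and power allocation `p`. -/
noncomputable def sysEE {κ ι : Type*} (B Γ σ2 ξ Pd P0 : ℝ)
    (ω Ps : κ → ℝ) (g : κ → ι → ℝ)
    (U : Finset κ) (S : κ → Finset ι) (p : κ → ι → ℝ) : ℝ :=
  (∑ m ∈ U, ∑ i ∈ S m, ω m * B * Real.logb 2 (1 + p m i * g m i / (Γ * σ2))) /
    (∑ m ∈ U, ((∑ i ∈ S m, p m i) / ξ + (S m).card * Pd + Ps m) + P0)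

/-- `E` is the optimal system EE of the configuration `(U, S)` over the power box
(attained). -/
def IsOptSysEE {κ ι : Type*} (B Γ σ2 ξ Pd P0 : ℝ)
    (ω Ps : κ → ℝ) (g Pmax : κ → ι → ℝ)
    (U : Finset κ) (S : κ → Finset ι) (E : ℝ) : Prop :=
  (∃ p : κ → ι → ℝ, (∀ m ∈ U, ∀ i ∈ S m, p m i ∈ Set.Icc 0 (Pmax m i)) ∧
      sysEE B Γ σ2 ξ Pd P0 ω Ps g U S p = E) ∧
    ∀ p : κ → ι → ℝ, (∀ m ∈ U, ∀ i ∈ S m, p m i ∈ Set.Icc 0 (Pmax m i)) →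
      sysEE B Γ σ2 ξ Pd P0 ω Ps g U S p ≤ E



/-- Mediant-type upper bound: if both fractions are `≤ e`, so is the combined one. -/
lemma mediant_le_aux {N D n d e : ℝ} (hD : 0 < D) (hd : 0 < d)
    (h1 : N / D ≤ e) (h2 : n / d ≤ e) : (N + n) / (D + d) ≤ e := by
  rw [div_le_iff₀ hD] at h1
  rw [div_le_iff₀ hd] at h2
  rw [div_le_iff₀ (by linarith)]
  nlinarith

/-- Mediant-type lower bound. -/
lemma mediant_ge_aux {N D n d E : ℝ} (hD : 0 < D) (hd : 0 < d)
    (h1 : N / D = E) (h2 : E ≤ n / d) : E ≤ (N + n) / (D + d) := by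
  have hN : N = E * D := by rw [← h1]; field_simp
  rw [le_div_iff₀ hd] at h2
  rw [le_div_iff₀ (by linarith)]
  nlinarith

lemma sum_update_insert_aux {κ ι : Type*} [DecidableEq κ] [DecidableEq ι]
    (U : Finset κ) (S : κ → Finset ι) {k : κ} (hk : k ∈ U) {i : ι} (hi : i ∉ S k)
    (f : κ → ι → ℝ) :
    ∑ m ∈ U, ∑ j ∈ Function.update S k (insert i (S k)) m, f m j
      = (∑ m ∈ U, ∑ j ∈ S m, f m j) + f k i := by
  have h1 : ∀ m ∈ U, (∑ j ∈ Function.update S k (insert i (S k)) m, f m j)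
      = Function.update (fun m => ∑ j ∈ S m, f m j) k (f k i + ∑ j ∈ S k, f k j) m := by
    intro m _
    rcases eq_or_ne m k with h | h
    · subst h; simp [Finset.sum_insert hi]
    · simp [Function.update_of_ne h]
  rw [Finset.sum_congr rfl h1, Finset.sum_update_of_mem hk]
  have h2 := Finset.sum_eq_sum_sdiff_singleton_add hk (fun m => ∑ j ∈ S m, f m j)
  linarith

lemma sum_update_add_aux {κ : Type*} [DecidableEq κ] (U : Finset κ) {k : κ} (hk : k ∈ U)
    (F : κ → ℝ) (c : ℝ) :
    ∑ m ∈ U, Function.update F k (F k + c) m = (∑ m ∈ U, F m) + c := by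
  rw [Finset.sum_update_of_mem hk]
  have h2 := Finset.sum_eq_sum_sdiff_singleton_add hk F
  linarith

lemma sysEE_update_aux {κ ι : Type*} [DecidableEq κ] [DecidableEq ι]
    (B Γ σ2 ξ Pd P0 : ℝ) (ω Ps : κ → ℝ) (g : κ → ι → ℝ)
    (U : Finset κ) (S : κ → Finset ι) {k : κ} (hk : k ∈ U) {i : ι} (hi : i ∉ S k)
    (q : κ → ι → ℝ) :
    sysEE B Γ σ2 ξ Pd P0 ω Ps g U (Function.update S k (insert i (S k))) q
      = (Finset.sum U (fun m => ∑ j ∈ S m,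
            ω m * B * Real.logb 2 (1 + q m j * g m j / (Γ * σ2)))
            + ω k * B * Real.logb 2 (1 + q k i * g k i / (Γ * σ2)))
        / ((Finset.sum U (fun m =>
            (∑ j ∈ S m, q m j) / ξ + ((S m).card : ℝ) * Pd + Ps m) + P0)
            + (q k i / ξ + Pd)) := by
  unfold sysEE
  congr 1
  · exact sum_update_insert_aux U S hk hi _
  · have h1 : ∀ m ∈ U, ((∑ j ∈ Function.update S k (insert i (S k)) m, q m j) / ξ
        + ((Function.update S k (insert i (S k)) m).card : ℝ) * Pd + Ps m)
      = Function.update (fun m => (∑ j ∈ S m, q m j) / ξ + ((S m).card : ℝ) * Pd + Ps m) k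
          (((∑ j ∈ S k, q k j) / ξ + ((S k).card : ℝ) * Pd + Ps k) + (q k i / ξ + Pd)) m := by
      intro m _
      rcases eq_or_ne m k with h | h
      · subst h
        simp only [Function.update_self, Finset.sum_insert hi, Finset.card_insert_of_notMem hi]
        push_cast
        ring
      · simp [Function.update_of_ne h]
    rw [Finset.sum_congr rfl h1, sum_update_add_aux U hk]
    ring

lemma den_pos_aux {κ ι : Type*} {ξ Pd P0 : ℝ} {Ps : κ → ℝ}
    (hξ0 : 0 < ξ) (hPd : 0 ≤ Pd) (hP0 : 0 < P0) (hPs : ∀ m, 0 < Ps m)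
    (U : Finset κ) (S : κ → Finset ι) (q : κ → ι → ℝ)
    (hq : ∀ m ∈ U, ∀ j ∈ S m, 0 ≤ q m j) :
    0 < Finset.sum U (fun m => (∑ j ∈ S m, q m j) / ξ + ((S m).card : ℝ) * Pd + Ps m) + P0 := by
  have hsum : 0 ≤ Finset.sum U
      (fun m => (∑ j ∈ S m, q m j) / ξ + ((S m).card : ℝ) * Pd + Ps m) := by
    refine Finset.sum_nonneg (fun m hm => ?_)
    have hs : 0 ≤ ∑ j ∈ S m, q m j := Finset.sum_nonneg (fun j hj => hq m hm j hj)
    have h1 : 0 ≤ (∑ j ∈ S m, q m j) / ξ := div_nonneg hs hξ0.le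
    have h2 : 0 ≤ ((S m).card : ℝ) * Pd := mul_nonneg (Nat.cast_nonneg _) hPd
    have := (hPs m).le
    linarith
  linarith

/-- Theorem 2, part 2, of the paper. User `k` is scheduled in the configuration
`(U, S)` and `i ∉ S k` is a further link of `k` with optimal link EE `ee*_{k,i}`.
(a) If `EE*_Φ ≤ ee*_{k,i}`, then `EE*_Φ ≤ EE*_{Φ'} ≤ ee*_{k,i}`, where `Φ'`
additionally activates link `i` for user `k`. (b) In particular, if `(U, S)`
maximizes the system EE over all configurations and
`EE*_Φ ≤ EE*_{Φ*_k} ≤ ee*_{k,i}` where `Φ*_k ∋ i` is a link set of user `k` with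
optimal user EE `EE*_{Φ*_k}`, then `EE*_{Φ'} = EE*_Φ`: activating link `i` also
attains the maximum system EE. -/
theorem sysEE_activate_link_of_scheduled_user {κ ι : Type*} [DecidableEq κ] [DecidableEq ι]
    (B Γ σ2 ξ Pd P0 : ℝ)
    (hB : 0 < B) (hΓ : 0 < Γ) (hσ2 : 0 < σ2)
    (hξ0 : 0 < ξ) (hξ1 : ξ ≤ 1) (hPd : 0 < Pd) (hP0 : 0 < P0)
    (ω Ps : κ → ℝ) (g Pmax : κ → ι → ℝ)
    (hω : ∀ m, 0 < ω m) (hPs : ∀ m, 0 < Ps m)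
    (hg : ∀ m i, 0 < g m i) (hPm : ∀ m i, 0 < Pmax m i)
    (U : Finset κ) (S : κ → Finset ι)
    (hSne : ∀ m ∈ U, (S m).Nonempty)
    (k : κ) (hk : k ∈ U) (i : ι) (hi : i ∉ S k)
    (Esys : Finset κ → (κ → Finset ι) → ℝ)
    (hEsys : ∀ (U' : Finset κ) (S' : κ → Finset ι),
      IsOptSysEE B Γ σ2 ξ Pd P0 ω Ps g Pmax U' S' (Esys U' S'))
    (eki : ℝ)
    (heki : IsOptLinkEE (ω k) B Γ σ2 ξ Pd (g k i) (Pmax k i) eki) :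
    (Esys U S ≤ eki →
        Esys U S ≤ Esys U (Function.update S k (insert i (S k))) ∧
          Esys U (Function.update S k (insert i (S k))) ≤ eki) ∧
      ((∀ (U' : Finset κ) (S' : κ → Finset ι), Esys U' S' ≤ Esys U S) →
        ∀ (Φstark : Finset ι) (Ek : ℝ), i ∈ Φstark →
          IsOptUserEE (ω k) B Γ σ2 ξ Pd (Ps k) Φstark (g k) (Pmax k) Ek →
          Esys U S ≤ Ek → Ek ≤ eki →
          Esys U (Function.update S k (insert i (S k))) = Esys U S) := by
  obtain ⟨⟨pstar, hpstar_mem, hpstar_val⟩, hopt_link⟩ := heki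
  have key : Esys U S ≤ eki →
      Esys U S ≤ Esys U (Function.update S k (insert i (S k))) ∧
        Esys U (Function.update S k (insert i (S k))) ≤ eki := by
    intro hle
    constructor
    · -- lower bound
      obtain ⟨p, hpfeas, hpval⟩ := (hEsys U S).1
      set q : κ → ι → ℝ := Function.update p k (Function.update (p k) i pstar) with hq
      have hqki : q k i = pstar := by simp [hq]
      have hq_eq : ∀ m ∈ U, ∀ j ∈ S m, q m j = p m j := by
        intro m hm j hj
        rcases eq_or_ne m k with h | h
        · subst h
          have hji : j ≠ i := fun h' => hi (h' ▸ hj)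
          simp [hq, Function.update_of_ne hji]
        · simp [hq, Function.update_of_ne h]
      have feasq : ∀ m ∈ U, ∀ j ∈ Function.update S k (insert i (S k)) m,
          q m j ∈ Set.Icc 0 (Pmax m j) := by
        intro m hm j hj
        rcases eq_or_ne m k with h | h
        · subst h
          rw [Function.update_self] at hj
          rcases Finset.mem_insert.mp hj with h' | hj'
          · subst h'
            rw [hqki]; exact hpstar_mem
          · rw [hq_eq m hm j hj']; exact hpfeas m hm j hj'
        · rw [Function.update_of_ne h] at hj
          rw [hq_eq m hm j hj]; exact hpfeas m hm j hj
      refine le_trans ?_ ((hEsys U (Function.update S k (insert i (S k)))).2 q feasq)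
      rw [sysEE_update_aux B Γ σ2 ξ Pd P0 ω Ps g U S hk hi q]
      have hq0 : ∀ m ∈ U, ∀ j ∈ S m, 0 ≤ q m j := fun m hm j hj =>
        (hq_eq m hm j hj) ▸ (hpfeas m hm j hj).1
      have hD := den_pos_aux hξ0 hPd.le hP0 hPs U S q hq0
      have hd : 0 < q k i / ξ + Pd := by
        have h1 : 0 ≤ q k i / ξ := div_nonneg (hqki ▸ hpstar_mem.1) hξ0.le
        linarith
      apply mediant_ge_aux hD hd
      · have hnum : (∑ m ∈ U, ∑ j ∈ S m,
            ω m * B * Real.logb 2 (1 + q m j * g m j / (Γ * σ2)))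
            = ∑ m ∈ U, ∑ j ∈ S m,
              ω m * B * Real.logb 2 (1 + p m j * g m j / (Γ * σ2)) :=
          Finset.sum_congr rfl fun m hm => Finset.sum_congr rfl fun j hj => by
            rw [hq_eq m hm j hj]
        have hden : (∑ m ∈ U, ((∑ j ∈ S m, q m j) / ξ + ((S m).card : ℝ) * Pd + Ps m))
            = ∑ m ∈ U, ((∑ j ∈ S m, p m j) / ξ + ((S m).card : ℝ) * Pd + Ps m) :=
          Finset.sum_congr rfl fun m hm => by
            have hs : (∑ j ∈ S m, q m j) = ∑ j ∈ S m, p m j :=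
              Finset.sum_congr rfl fun j hj => hq_eq m hm j hj
            rw [hs]
        show (Finset.sum U (fun m => ∑ j ∈ S m,
              ω m * B * Real.logb 2 (1 + q m j * g m j / (Γ * σ2))))
            / (Finset.sum U (fun m =>
              (∑ j ∈ S m, q m j) / ξ + ((S m).card : ℝ) * Pd + Ps m) + P0) = Esys U S
        rw [hnum, hden]
        exact hpval
      · show Esys U S ≤ linkEE (ω k) B Γ σ2 ξ Pd (g k i) (q k i)
        rw [hqki, hpstar_val]
        exact hle
    · -- upper bound
      obtain ⟨q, hqfeas, hqval⟩ := (hEsys U (Function.update S k (insert i (S k)))).1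
      rw [← hqval, sysEE_update_aux B Γ σ2 ξ Pd P0 ω Ps g U S hk hi q]
      have hmemq : ∀ m ∈ U, ∀ j ∈ S m, q m j ∈ Set.Icc 0 (Pmax m j) := by
        intro m hm j hj
        rcases eq_or_ne m k with h | h
        · subst h
          exact hqfeas m hm j
            (by rw [Function.update_self]; exact Finset.mem_insert_of_mem hj)
        · exact hqfeas m hm j (by rw [Function.update_of_ne h]; exact hj)
      have hqki_mem : q k i ∈ Set.Icc 0 (Pmax k i) := hqfeas k hk i
        (by rw [Function.update_self]; exact Finset.mem_insert_self i (S k))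
      have hD := den_pos_aux hξ0 hPd.le hP0 hPs U S q
        (fun m hm j hj => (hmemq m hm j hj).1)
      apply mediant_le_aux hD
      · have h1 : 0 ≤ q k i / ξ := div_nonneg hqki_mem.1 hξ0.le
        linarith
      · show sysEE B Γ σ2 ξ Pd P0 ω Ps g U S q ≤ eki
        exact le_trans ((hEsys U S).2 q hmemq) hle
      · show linkEE (ω k) B Γ σ2 ξ Pd (g k i) (q k i) ≤ eki
        exact hopt_link (q k i) hqki_mem
  refine ⟨key, fun hopt Φstark Ek hiΦ hIsOpt hE1 hE2 => ?_⟩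
  exact le_antisymm (hopt U _) ((key (le_trans hE1 hE2)).1)
end

section
/- Let K ≥ 1 and for each user k ∈ {1, …, K} let X_k be a nonempty compact topological space, R_k : X_k → ℝ continuous with R_k ≥ 0, C_k : X_k → ℝ continuous with C_k ≥ 0, and suppose max_{X_k} R_k > 0 for every k. For a nonempty subset U ⊆ {1, …, K} and s > 0, define V_U(s) = max over ∏_{k∈U} X_k of (Σ_{k∈U} R_k(x_k)) / (Σ_{k∈U} C_k(x_k) + s) (attained by compactness and continuity). Then there exists s₀ > 0 such that for all s ≥ s₀ and every nonempty proper subset U ⊊ {1, …, K}, V_{{1,…,K}}(s) > V_U(s). Hence, when the static receiving power is sufficiently large, scheduling all users is optimal for energy-efficient transmission. (Theorem 3, part 3, of the paper.) -/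
/-- Theorem 3, part 3, of the paper: when the static receiving power is sufficiently
large, scheduling all users is optimal. Each user `k` has a nonempty compact feasible
set `X k`, continuous nonnegative rate `R k` and consumed power `C k`, and can
achieve a strictly positive rate. `V U s` is the (attained) maximum of
`(Σ_{k∈U} R_k(x_k)) / (Σ_{k∈U} C_k(x_k) + s)`. Then there is an `s₀ > 0` such that
for all `s ≥ s₀`, the full user set strictly beats every nonempty proper subset. -/
theorem schedule_all_users_for_large_static_power
    (K : ℕ) (hK : 1 ≤ K) (X : Fin K → Type*)
    [∀ k, TopologicalSpace (X k)] [∀ k, CompactSpace (X k)] [∀ k, Nonempty (X k)]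
    (R C : ∀ k : Fin K, X k → ℝ)
    (hRcont : ∀ k, Continuous (R k)) (hCcont : ∀ k, Continuous (C k))
    (hR0 : ∀ k x, 0 ≤ R k x) (hC0 : ∀ k x, 0 ≤ C k x)
    (hRpos : ∀ k, ∃ x, 0 < R k x)
    (V : Finset (Fin K) → ℝ → ℝ)
    (hV : ∀ (U : Finset (Fin K)), U.Nonempty → ∀ s : ℝ, 0 < s →
      IsGreatest {r : ℝ | ∃ x : ∀ k, X k,
        r = (∑ k ∈ U, R k (x k)) / (∑ k ∈ U, C k (x k) + s)} (V U s)) :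
    ∃ s₀ : ℝ, 0 < s₀ ∧ ∀ s : ℝ, s₀ ≤ s →
      ∀ U : Finset (Fin K), U.Nonempty → U ≠ Finset.univ →
        V U s < V Finset.univ s := by
  haveI : Nonempty (Fin K) := ⟨⟨0, hK⟩⟩
  -- for each k, pick a maximizer of R k
  have hmax : ∀ k : Fin K, ∃ x : X k, ∀ y : X k, R k y ≤ R k x := by
    intro k
    obtain ⟨x, -, hx⟩ := IsCompact.exists_isMaxOn isCompact_univ Set.univ_nonempty
      ((hRcont k).continuousOn)
    exact ⟨x, fun y => hx (Set.mem_univ y)⟩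
  choose xs hxs using hmax
  set M : Fin K → ℝ := fun k => R k (xs k) with hM
  have hMpos : ∀ k, 0 < M k := by
    intro k
    obtain ⟨y, hy⟩ := hRpos k
    exact lt_of_lt_of_le hy (hxs k y)
  set T : ℝ := ∑ k, M k with hT
  set B : ℝ := ∑ k, C k (xs k) with hB
  have hBnn : 0 ≤ B := Finset.sum_nonneg fun k _ => hC0 k (xs k)
  set m : ℝ := Finset.univ.inf' Finset.univ_nonempty M with hm
  have hmpos : 0 < m := by
    rw [hm, Finset.lt_inf'_iff]
    exact fun k _ => hMpos k
  have hmleT : m ≤ T := by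
    have : m ≤ M (Classical.arbitrary (Fin K)) :=
      Finset.inf'_le _ (Finset.mem_univ _)
    refine this.trans (Finset.single_le_sum (fun k _ => (hMpos k).le) (Finset.mem_univ _))
  have hs0nn : 0 ≤ T * B / m := div_nonneg (mul_nonneg (by linarith) hBnn) hmpos.le
  refine ⟨T * B / m + 1, by linarith, ?_⟩
  intro s hs U hUne hUneq
  have hs1 : (1 : ℝ) ≤ s := by linarith
  have hspos : 0 < s := lt_of_lt_of_le one_pos hs1
  -- pick j ∉ U
  have : ∃ j : Fin K, j ∉ U := by
    by_contra h
    push_neg at h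
    exact hUneq (Finset.eq_univ_iff_forall.mpr h)
  obtain ⟨j, hj⟩ := this
  -- lower bound for V univ s
  have hVuniv : T / (B + s) ≤ V Finset.univ s := by
    have := (hV Finset.univ Finset.univ_nonempty s hspos).2
    exact this ⟨xs, rfl⟩
  -- upper bound for V U s
  obtain ⟨⟨x, hx⟩, -⟩ := hV U hUne s hspos
  have hnum : ∑ k ∈ U, R k (x k) ≤ T - m := by
    have h1 : ∑ k ∈ U, R k (x k) ≤ ∑ k ∈ U, M k :=
      Finset.sum_le_sum fun k _ => hxs k (x k)
    have h2 : ∑ k ∈ U, M k ≤ ∑ k ∈ Finset.univ.erase j, M k := by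
      refine Finset.sum_le_sum_of_subset_of_nonneg ?_ (fun k _ _ => (hMpos k).le)
      intro k hk
      exact Finset.mem_erase.mpr ⟨fun h => hj (h ▸ hk), Finset.mem_univ k⟩
    have h3 : ∑ k ∈ Finset.univ.erase j, M k = T - M j := by
      have := Finset.sum_erase_add Finset.univ M (Finset.mem_univ j)
      linarith [this]
    have h4 : m ≤ M j := Finset.inf'_le _ (Finset.mem_univ j)
    linarith
  have hden : s ≤ ∑ k ∈ U, C k (x k) + s := by
    have : 0 ≤ ∑ k ∈ U, C k (x k) := Finset.sum_nonneg fun k _ => hC0 k (x k)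
    linarith
  have hVU : V U s ≤ (T - m) / s := by
    rw [hx]
    exact div_le_div₀ (by linarith) hnum hspos hden
  -- strict inequality
  have key : (T - m) / s < T / (B + s) := by
    rw [div_lt_div_iff₀ hspos (by linarith : (0:ℝ) < B + s)]
    have hms : T * B + m ≤ m * s := by
      have := (div_le_iff₀ hmpos).mp (by linarith : T * B / m ≤ s - 1)
      nlinarith
    nlinarith [hmpos, hBnn]
  linarith
end

section
/- Let X be a nonempty set, R : X → ℝ with R ≥ 0, and C : X → ℝ with C ≥ 0. Let 0 < s₁ < s₂, suppose x₁ maximizes x ↦ R(x)/(C(x) + s₁) over X and x₂ maximizes x ↦ R(x)/(C(x) + s₂) over X, and suppose R(x₁) > 0. Then R(x₂) ≥ R(x₁) and C(x₂) ≥ C(x₁): as the static power s increases, any optimizer of the fractional objective has nondecreasing optimal rate and nondecreasing optimal consumed power. -/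
/-- Comparative statics in the static receiving power (core of Theorem 3, part 1):
if `x₁` maximizes `R/(C + s₁)` and `x₂` maximizes `R/(C + s₂)` with
`0 < s₁ < s₂` and `R x₁ > 0`, then the optimal rate and optimal consumed power
are nondecreasing in `s`: `R x₁ ≤ R x₂` and `C x₁ ≤ C x₂`. -/
theorem optimizer_monotone_in_static_power {X : Type*}
    (R C : X → ℝ) (hR : ∀ x, 0 ≤ R x) (hC : ∀ x, 0 ≤ C x)
    (s₁ s₂ : ℝ) (hs₁ : 0 < s₁) (hs : s₁ < s₂)
    (x₁ x₂ : X)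
    (hx₁ : ∀ x, R x / (C x + s₁) ≤ R x₁ / (C x₁ + s₁))
    (hx₂ : ∀ x, R x / (C x + s₂) ≤ R x₂ / (C x₂ + s₂))
    (hRx₁ : 0 < R x₁) :
    R x₁ ≤ R x₂ ∧ C x₁ ≤ C x₂ := by
  have d11 : 0 < C x₁ + s₁ := by linarith [hC x₁]
  have d21 : 0 < C x₂ + s₁ := by linarith [hC x₂]
  have d12 : 0 < C x₁ + s₂ := by linarith [hC x₁]
  have d22 : 0 < C x₂ + s₂ := by linarith [hC x₂]
  have h1 := hx₁ x₂
  have h2 := hx₂ x₁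
  rw [div_le_div_iff₀ d21 d11] at h1
  rw [div_le_div_iff₀ d12 d22] at h2
  have hA : R x₁ ≤ R x₂ := by nlinarith
  refine ⟨hA, ?_⟩
  nlinarith
end
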